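/- arXiv:1705.09379 — 7 statements merged into one kernel-verified Lean document; each statement's English description precedes it below -/
import Mathlib

section
/- Let b₁, b₂ be the standard basis of ℂ². Define W₃ = b₂ ⊗ b₁ ⊗ b₁ + b₁ ⊗ b₂ ⊗ b₁ + b₁ ⊗ b₁ ⊗ b₂ ∈ (ℂ²)^⊗3. Then the tensor rank of W₃ equals 3. -/
open scoped BigOperators

universe u v

noncomputable section

variable {F : Type v}

/-- Tensor rank: the least `r` such that `T` is a sum of `r` simple tensors. -/
def tRank {ι : Type*} [Fintype ι] [DecidableEq ι] {γ : ι → Type*} [∀ i, Fintype (γ i)]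
    [Field F] (T : (∀ i, γ i) → F) : ℕ :=
  sInf {r | ∃ v : Fin r → ∀ i, γ i → F, ∀ x, T x = ∑ j, ∏ i, v j i (x i)}

/-- Tensor product of a `ι`-indexed tensor and a `κ`-indexed tensor (no grouping). -/
def tProd [Field F] {ι κ : Type*} {γ : ι → Type u} {δ : κ → Type u}
    (S : (∀ i, γ i) → F) (T : (∀ j, δ j) → F) : (∀ i : ι ⊕ κ, Sum.elim γ δ i) → F :=
  fun x => S (fun i => x (Sum.inl i)) * T (fun j => x (Sum.inr j))

instance sumElimFintype {ι κ : Type*} {γ : ι → Type u} {δ : κ → Type u}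
    [hγ : ∀ i, Fintype (γ i)] [hδ : ∀ j, Fintype (δ j)] :
    ∀ i : ι ⊕ κ, Fintype (Sum.elim γ δ i)
  | Sum.inl i => hγ i
  | Sum.inr j => hδ j

/-- Tensor Kronecker product of two tensors with the same index set. -/
def tKron [Field F] {ι : Type*} {γ δ : ι → Type*}
    (S : (∀ i, γ i) → F) (T : (∀ i, δ i) → F) : (∀ i, γ i × δ i) → F :=
  fun x => S (fun i => (x i).1) * T (fun i => (x i).2)

/-- `n`-fold tensor product power of a tensor (no grouping), a tensor indexed by `Fin n × ι`. -/
def tPow [Field F] {ι : Type*} {γ : ι → Type*} (T : (∀ i, γ i) → F) (n : ℕ) :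
    (∀ p : Fin n × ι, γ p.2) → F :=
  fun x => ∏ j : Fin n, T (fun i => x (j, i))

/-- Restriction `t ≥ s`: `s` is obtained from `t` by applying linear maps on each factor. -/
def Restricts [Field F] {ι : Type*} [Fintype ι] [DecidableEq ι]
    {γ : ι → Type*} {δ : ι → Type*} [∀ i, Fintype (γ i)]
    (t : (∀ i, γ i) → F) (s : (∀ i, δ i) → F) : Prop :=
  ∃ A : ∀ i, δ i → γ i → F, ∀ x, (∑ y : ∀ i, γ i, (∏ i, A i (x i) (y i)) * t y) = s x

/-- Degeneration `t ⊵_d^e s` with approximation degree `d` and error degree `e`. -/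
def Degen [Field F] {ι : Type*} [Fintype ι] [DecidableEq ι]
    {γ : ι → Type*} {δ : ι → Type*} [∀ i, Fintype (γ i)]
    (t : (∀ i, γ i) → F) (s : (∀ i, δ i) → F) (d e : ℕ) : Prop :=
  ∃ A : ∀ i, δ i → γ i → Polynomial F, ∃ s' : Fin e → ((∀ i, δ i) → F),
    ∀ x, (∑ y : ∀ i, γ i, (∏ i, A i (x i) (y i)) * Polynomial.C (t y)) =
      Polynomial.C (s x) * Polynomial.X ^ d +
      ∑ j : Fin e, Polynomial.C (s' j x) * Polynomial.X ^ (d + 1 + (j : ℕ))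

/-- The rank-`r` order-`k` unit tensor `⟨r⟩_k = ∑_j b_j^{⊗k}`. -/
def unitTensor (F : Type v) [Field F] (r k : ℕ) : (Fin k → Fin r) → F :=
  fun x => ∑ j : Fin r, ∏ i : Fin k, if x i = j then 1 else 0

/-- The tensor `W_k = ∑_{type(i)=(k-1,1)} b_{i₁} ⊗ ⋯ ⊗ b_{i_k}` in `(F²)^{⊗k}`. -/
def Wtensor (F : Type v) [Field F] (k : ℕ) : (Fin k → Fin 2) → F :=
  fun x => if (∑ i, (x i : ℕ)) = 1 then 1 else 0

/-- `R^e(s)`: border rank with error degree at most `e`. -/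
def errRank [Field F] {k : ℕ} {γ : Fin k → Type*} [∀ i, Fintype (γ i)]
    (e : ℕ) (s : (∀ i, γ i) → F) : ℕ :=
  sInf {r | ∃ d, Degen (unitTensor F r k) s d e}

/-- `R_d(s)`: border rank with approximation degree `d`. -/
def degRank [Field F] {k : ℕ} {γ : Fin k → Type*} [∀ i, Fintype (γ i)]
    (d : ℕ) (s : (∀ i, γ i) → F) : ℕ :=
  sInf {r | ∃ e, Degen (unitTensor F r k) s d e}

/-- Border rank over ℂ: the least `r` such that `T` is a limit of tensors of rank `≤ r`. -/
def tBorderRank {ι : Type*} [Fintype ι] [DecidableEq ι] {γ : ι → Type*} [∀ i, Fintype (γ i)]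
    (T : (∀ i, γ i) → ℂ) : ℕ :=
  sInf {r | T ∈ closure {T' : (∀ i, γ i) → ℂ | tRank T' ≤ r}}

end

noncomputable section AuxW3

def W3set : Set ℕ :=
  {r | ∃ v : Fin r → ∀ _ : Fin 3, Fin 2 → ℂ, ∀ x, Wtensor ℂ 3 x = ∑ j, ∏ i, v j i (x i)}

lemma W3set_mono {r r' : ℕ} (hle : r ≤ r') (h : r ∈ W3set) : r' ∈ W3set := by
  obtain ⟨v, hv⟩ := h
  refine ⟨fun j => if h : (j : ℕ) < r then v ⟨j, h⟩ else fun _ _ => 0, fun x => ?_⟩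
  rw [hv x]
  rw [← Finset.sum_subset (Finset.subset_univ
      ((Finset.univ : Finset (Fin r)).map (Fin.castLEEmb hle))) ?_]
  · rw [Finset.sum_map]
    apply Finset.sum_congr rfl
    intro j _
    apply Finset.prod_congr rfl
    intro i _
    simp [Fin.castLEEmb, Fin.castLE, j.isLt]
  · intro j _ hj
    have hjr : ¬ (j : ℕ) < r := by
      intro hlt
      exact hj (by simp only [Finset.mem_map, Finset.mem_univ, true_and]
                   exact ⟨⟨j, hlt⟩, rfl⟩)
    simp [dif_neg hjr]

lemma three_mem : (3 : ℕ) ∈ W3set := by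
  refine ⟨![![![(1:ℂ)/2, 1/2], ![1,1], ![1,1]],
            ![![-(1:ℂ)/2, 1/2], ![-1,1], ![-1,1]],
            ![![(0:ℂ),-1], ![0,1], ![0,1]]], fun x => ?_⟩
  have h0 : x 0 = 0 ∨ x 0 = 1 := by omega
  have h1 : x 1 = 0 ∨ x 1 = 1 := by omega
  have h2 : x 2 = 0 ∨ x 2 = 1 := by omega
  rcases h0 with h0 | h0 <;> rcases h1 with h1 | h1 <;> rcases h2 with h2 | h2 <;>
    simp [Wtensor, Fin.sum_univ_three, Fin.prod_univ_three, h0, h1, h2,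
      Matrix.vecHead, Matrix.vecTail] <;> norm_num [Matrix.vecHead, Matrix.vecTail]

lemma two_not_mem : (2 : ℕ) ∉ W3set := by
  rintro ⟨v, hv⟩
  set a0 := v 0 0 0 with hA0; set a1 := v 0 0 1 with hA1
  set b0 := v 0 1 0 with hB0; set b1 := v 0 1 1 with hB1
  set c0 := v 0 2 0 with hC0; set c1 := v 0 2 1 with hC1
  set a0' := v 1 0 0 with hA0'; set a1' := v 1 0 1 with hA1'
  set b0' := v 1 1 0 with hB0'; set b1' := v 1 1 1 with hB1'
  set c0' := v 1 2 0 with hC0'; set c1' := v 1 2 1 with hC1'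
  have key : ∀ i j k : Fin 2, Wtensor ℂ 3 ![i, j, k] =
      v 0 0 i * v 0 1 j * v 0 2 k + v 1 0 i * v 1 1 j * v 1 2 k := by
    intro i j k
    have := hv ![i, j, k]
    simpa [Fin.sum_univ_two, Fin.prod_univ_three] using this
  have e000 := key 0 0 0
  have e001 := key 0 0 1
  have e010 := key 0 1 0
  have e011 := key 0 1 1
  have e100 := key 1 0 0
  have e101 := key 1 0 1
  have e110 := key 1 1 0
  have e111 := key 1 1 1
  simp only [Wtensor, Fin.sum_univ_three, Matrix.cons_val_zero, Matrix.cons_val_one,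
    Matrix.head_cons, Matrix.cons_val_two, Matrix.tail_cons, ← hA0, ← hA1, ← hB0, ← hB1,
    ← hC0, ← hC1, ← hA0', ← hA1', ← hB0', ← hB1', ← hC0', ← hC1']
    at e000 e001 e010 e011 e100 e101 e110 e111
  norm_num at e000 e001 e010 e011 e100 e101 e110 e111
  set D : ℂ := b0*c0*b1'*c1' + b0'*c0'*b1*c1 - b0*c1*b1'*c0' - b0'*c1'*b1*c0 with hD
  have f1 : (a0+a1)*b0*c0 + (a0'+a1')*b0'*c0' = 1 := by linear_combination -e000 - e100
  have f2 : (a0+a1)*b1*c1 + (a0'+a1')*b1'*c1' = 0 := by linear_combination -e011 - e111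
  have f3 : (a0+a1)*b0*c1 + (a0'+a1')*b0'*c1' = 1 := by linear_combination -e001 - e101
  have f4 : (a0+a1)*b1*c0 + (a0'+a1')*b1'*c0' = 1 := by linear_combination -e010 - e110
  have h1 : a0*a0'*D = -1 := by
    have k : (a0*b0*c0 + a0'*b0'*c0') * (a0*b1*c1 + a0'*b1'*c1')
        - (a0*b0*c1 + a0'*b0'*c1') * (a0*b1*c0 + a0'*b1'*c0') = 0 * 0 - 1 * 1 := by
      rw [← e000, ← e011, ← e001, ← e010]
    linear_combination k
  have h2 : a1*a1'*D = 0 := by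
    have k : (a1*b0*c0 + a1'*b0'*c0') * (a1*b1*c1 + a1'*b1'*c1')
        - (a1*b0*c1 + a1'*b0'*c1') * (a1*b1*c0 + a1'*b1'*c0') = 1 * 0 - 0 * 0 := by
      rw [← e100, ← e111, ← e101, ← e110]
    linear_combination k
  have h3 : (a0+a1)*(a0'+a1')*D = -1 := by
    have k : ((a0+a1)*b0*c0 + (a0'+a1')*b0'*c0') * ((a0+a1)*b1*c1 + (a0'+a1')*b1'*c1')
        - ((a0+a1)*b0*c1 + (a0'+a1')*b0'*c1') * ((a0+a1)*b1*c0 + (a0'+a1')*b1'*c0')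
        = 1 * 0 - 1 * 1 := by
      rw [f1, f2, f3, f4]
    linear_combination k
  have hsum : a0*a1'*D + a1*a0'*D = 0 := by linear_combination h3 - h1 - h2
  have hPD : (a0*a1'*D)*(a1*a0'*D) = 0 := by linear_combination (a1*a1'*D)*h1 - h2
  have hsq : (a0*a1'*D)^2 = 0 := by linear_combination (a0*a1'*D)*hsum - hPD
  have hP : a0*a1'*D = 0 := pow_eq_zero_iff two_ne_zero |>.mp hsq
  have hQ : a1*a0'*D = 0 := by linear_combination hsum - hP
  have ha1 : a1 = 0 := by linear_combination a1*h1 - a0*hQ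
  have ha1' : a1' = 0 := by linear_combination a1'*h1 - a0'*hP
  rw [ha1, ha1'] at e100
  simp at e100

end AuxW3

/-- the tensor rank of `W₃` equals 3. -/
theorem rank_W3 : tRank (Wtensor ℂ 3) = 3 := by
  rw [tRank]
  apply le_antisymm
  · exact Nat.sInf_le three_mem
  · refine le_csInf ⟨3, three_mem⟩ ?_
    intro r hr
    by_contra hlt
    push_neg at hlt
    exact two_not_mem (W3set_mono (by omega) hr)
end

section
/- Let F be a field with char(F) ≠ 2 and √2 ∈ F, let b₁, b₂ be the standard basis of F², and let W₃ = b₂ ⊗ b₁ ⊗ b₁ + b₁ ⊗ b₂ ⊗ b₁ + b₁ ⊗ b₁ ⊗ b₂ ∈ (F²)^⊗3. Then the tensor rank of the 6-tensor W₃ ⊗ W₃ ∈ (F²)^⊗6 is at most 8, which is strictly less than rank(W₃)² = 9. -/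
open scoped BigOperators

universe u v

/-!
`W₃` is not a sum of two simple tensors: its two slices along the first factor have determinants
`-1` and `0`, whereas the slices of `a ⊗ b ⊗ c + A ⊗ B ⊗ C` have determinants
`aₓ Aₓ det(b, B) det(c, C)`. Hence `rank W₃ = 3`.

For the upper bound let `E = b₂ ⊗ b₂ ⊗ b₂` and `Pₐ = (b₁ + a b₂)^{⊗3}`. Taking the part of `Pₐ`
that is odd in `a` gives `Pₐ - P₋ₐ = 2a (W₃ + a² E)`, so `W₃ + a² E` has rank at most `2` when
`2a ≠ 0`. For `s = 1/√2`,
`W₃ ⊗ W₃ = (W₃ + E) ⊗ (W₃ + E) - E ⊗ (W₃ + s² E) - (W₃ + s² E) ⊗ E`,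
a sum of `4 + 2 + 2` simple tensors.
-/

section SumOfSimple

variable {F : Type*} [Field F] {ι : Type*} [Fintype ι] {γ : ι → Type*}

def IsSumOfSimple (r : ℕ) (T : (∀ i, γ i) → F) : Prop :=
  ∃ v : Fin r → ∀ i, γ i → F, ∀ x, T x = ∑ j, ∏ i, v j i (x i)

variable {r n : ℕ} {S T : (∀ i, γ i) → F}

theorem tRank_le [DecidableEq ι] [∀ i, Fintype (γ i)] (h : IsSumOfSimple r T) : tRank T ≤ r :=
  Nat.sInf_le h

theorem isSumOfSimple_zero [Nonempty ι] (r : ℕ) : IsSumOfSimple r (0 : (∀ i, γ i) → F) :=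
  ⟨fun _ _ _ => 0, fun x => by simp⟩

theorem IsSumOfSimple.add {s : ℕ} (hS : IsSumOfSimple r S) (hT : IsSumOfSimple s T) :
    IsSumOfSimple (r + s) (S + T) := by
  obtain ⟨v, hv⟩ := hS
  obtain ⟨w, hw⟩ := hT
  exact ⟨Fin.append v w, fun x => by simp [Fin.sum_univ_add, hv, hw]⟩

theorem IsSumOfSimple.mono [Nonempty ι] {s : ℕ} (h : IsSumOfSimple r T) (hrs : r ≤ s) :
    IsSumOfSimple s T := by
  obtain ⟨m, rfl⟩ := Nat.exists_eq_add_of_le hrs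
  simpa using h.add (isSumOfSimple_zero m)

theorem lt_tRank [DecidableEq ι] [∀ i, Fintype (γ i)] [Nonempty ι] (hT : IsSumOfSimple r T)
    (hn : ¬ IsSumOfSimple n T) : n < tRank T := by
  by_contra! h
  have hrank : IsSumOfSimple (tRank T) T := Nat.sInf_mem (⟨r, hT⟩ : ∃ r, IsSumOfSimple r T)
  exact hn (hrank.mono h)

theorem IsSumOfSimple.smul [Nonempty ι] (c : F) (h : IsSumOfSimple r T) :
    IsSumOfSimple r (c • T) := by
  classical
  obtain ⟨v, hv⟩ := h
  obtain ⟨i₀⟩ := ‹Nonempty ι›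
  refine ⟨fun j i y => (if i = i₀ then c else 1) * v j i y, fun x => ?_⟩
  rw [Pi.smul_apply, hv, smul_eq_mul, Finset.mul_sum]
  simp only [Finset.prod_mul_distrib, Finset.prod_ite_eq', Finset.mem_univ, if_true]

end SumOfSimple

theorem IsSumOfSimple.tProd {F : Type*} [Field F] {ι κ : Type*} [Fintype ι] [Fintype κ]
    {γ : ι → Type u} {δ : κ → Type u} {r s : ℕ} {S : (∀ i, γ i) → F} {T : (∀ j, δ j) → F}
    (hS : IsSumOfSimple r S) (hT : IsSumOfSimple s T) : IsSumOfSimple (r * s) (tProd S T) := by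
  obtain ⟨v, hv⟩ := hS
  obtain ⟨w, hw⟩ := hT
  refine ⟨fun j => let p := finProdFinEquiv.symm j; fun i => Sum.rec (v p.1) (w p.2) i, fun x => ?_⟩
  have hvx := hv fun i => x (Sum.inl i)
  have hwx := hw fun j => x (Sum.inr j)
  simp only [_root_.tProd] at hvx hwx ⊢
  rw [hvx, hwx, Finset.sum_mul_sum, ← finProdFinEquiv.sum_comp, Fintype.sum_prod_type]
  simp [Fintype.prod_sum_type]

section FinTwo

variable {F : Type*} [Field F] {k : ℕ}

def pureTensorPow {β : Type*} (p : β → F) (k : ℕ) : (Fin k → β) → F :=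
  fun x => ∏ i, p (x i)

theorem isSumOfSimple_one_pureTensorPow {β : Type*} (p : β → F) (k : ℕ) :
    IsSumOfSimple 1 (pureTensorPow p k) :=
  ⟨fun _ _ => p, fun x => by simp [pureTensorPow]⟩

theorem pureTensorPow_one_apply (a : F) (x : Fin k → Fin 2) :
    pureTensorPow ![1, a] k x = a ^ ∑ i, (x i : ℕ) := by
  have h : ∀ y : Fin 2, ![1, a] y = a ^ (y : ℕ) := Fin.forall_fin_two.2 ⟨by simp, by simp⟩
  simp only [pureTensorPow, h, Finset.prod_pow_eq_pow_sum]

theorem pureTensorPow_zero_one_apply (x : Fin k → Fin 2) :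
    pureTensorPow ![(0 : F), 1] k x = if ∑ i, (x i : ℕ) = k then 1 else 0 := by
  have h : ∀ y : Fin 2, ![(0 : F), 1] y = if (y : ℕ) = 1 then 1 else 0 :=
    Fin.forall_fin_two.2 ⟨by simp, by simp⟩
  have hle : ∀ i ∈ Finset.univ, (x i : ℕ) ≤ 1 := fun i _ => Nat.lt_succ_iff.mp (x i).isLt
  simp only [pureTensorPow, h, Finset.prod_boole]
  congr 1
  simpa using (Finset.sum_eq_sum_iff_of_le hle).symm

theorem pureTensorPow_sub_pureTensorPow_neg (a : F) :
    pureTensorPow ![1, a] 3 - pureTensorPow ![1, -a] 3 =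
      (2 * a) • (Wtensor F 3 + a ^ 2 • pureTensorPow ![0, 1] 3) := by
  ext x
  simp only [Pi.sub_apply, Pi.smul_apply, Pi.add_apply, smul_eq_mul, pureTensorPow_one_apply,
    pureTensorPow_zero_one_apply, Wtensor]
  have hn : ∑ i, (x i : ℕ) ≤ 3 := by
    simp only [Fin.sum_univ_three]
    omega
  generalize ∑ i, (x i : ℕ) = n at *
  interval_cases n <;> simp <;> ring

theorem isSumOfSimple_two_Wtensor_three_add {a : F} (ha : 2 * a ≠ 0) :
    IsSumOfSimple 2 (Wtensor F 3 + a ^ 2 • pureTensorPow ![0, 1] 3) := by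
  have h : Wtensor F 3 + a ^ 2 • pureTensorPow ![0, 1] 3 =
      (2 * a)⁻¹ • pureTensorPow ![1, a] 3 + (-(2 * a)⁻¹) • pureTensorPow ![1, -a] 3 := by
    rw [neg_smul, ← sub_eq_add_neg, ← smul_sub, pureTensorPow_sub_pureTensorPow_neg, smul_smul,
      inv_mul_cancel₀ ha, one_smul]
  rw [h]
  exact ((isSumOfSimple_one_pureTensorPow _ 3).smul _).add
    ((isSumOfSimple_one_pureTensorPow _ 3).smul _)

theorem isSumOfSimple_eight_tProd_Wtensor_three {s : F} (hs : 2 * s ^ 2 = 1) :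
    IsSumOfSimple 8 (tProd (Wtensor F 3) (Wtensor F 3)) := by
  set E := pureTensorPow ![(0 : F), 1] 3
  have h2 : (2 : F) * 1 ≠ 0 := by
    rintro h
    simp_all
  have h2s : 2 * s ≠ 0 := by
    rintro h
    simp_all
  have hE : IsSumOfSimple 1 (-E) := by
    simpa using (isSumOfSimple_one_pureTensorPow ![(0 : F), 1] 3).smul (-1)
  have hdecomp : tProd (Wtensor F 3) (Wtensor F 3) =
      tProd (Wtensor F 3 + (1 : F) ^ 2 • E) (Wtensor F 3 + (1 : F) ^ 2 • E) +
        tProd (-E) (Wtensor F 3 + s ^ 2 • E) + tProd (Wtensor F 3 + s ^ 2 • E) (-E) := by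
    have h : ∀ w w' e e' : F, w * w' = (w + 1 ^ 2 * e) * (w' + 1 ^ 2 * e') +
        -e * (w' + s ^ 2 * e') + (w + s ^ 2 * e) * -e' := fun w w' e e' => by
      linear_combination e * e' * hs
    ext x
    exact h _ _ _ _
  rw [hdecomp]
  have hY₁ := isSumOfSimple_two_Wtensor_three_add h2
  have hY₂ := isSumOfSimple_two_Wtensor_three_add h2s
  exact ((hY₁.tProd hY₁).add (hE.tProd hY₂)).add (hY₂.tProd hE)

end FinTwo

section WThree

variable {F : Type*} [Field F]

theorem isSumOfSimple_three_Wtensor_three : IsSumOfSimple 3 (Wtensor F 3) := by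
  refine ⟨![![![0, 1], ![1, 0], ![1, 0]], ![![1, 0], ![0, 1], ![1, 0]],
    ![![1, 0], ![1, 0], ![0, 1]]], ?_⟩
  simp [Fin.forall_fin_succ_pi, Fin.forall_fin_two, Wtensor, Fin.sum_univ_three,
    Fin.prod_univ_three]

theorem Wtensor_three_ne_add_simple (a b c A B C : Fin 2 → F) :
    ¬ ∀ x y z, Wtensor F 3 ![x, y, z] = a x * b y * c z + A x * B y * C z := by
  intro hW
  simp only [Fin.forall_fin_two, Wtensor, Fin.sum_univ_three, Matrix.cons_val_zero,
    Matrix.cons_val_one, Matrix.cons_val, Fin.val_zero, Fin.val_one, Nat.reduceAdd,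
    Nat.reduceEqDiff, reduceIte] at hW
  obtain ⟨⟨⟨-, h001⟩, h010, h011⟩, ⟨h100, h101⟩, h110, h111⟩ := hW
  have hdet₀ : a 0 * A 0 * ((b 0 * B 1 - b 1 * B 0) * (c 0 * C 1 - c 1 * C 0)) = -1 := by
    linear_combination -(a 0 * b 0 * c 0 + A 0 * B 0 * C 0) * h011 +
      (a 0 * b 0 * c 1 + A 0 * B 0 * C 1) * h010 + h001
  have hdet₁ : a 1 * A 1 * ((b 0 * B 1 - b 1 * B 0) * (c 0 * C 1 - c 1 * C 0)) = 0 := by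
    linear_combination -(a 1 * b 0 * c 0 + A 1 * B 0 * C 0) * h111 +
      (a 1 * b 0 * c 1 + A 1 * B 0 * C 1) * h110
  have hdet : (b 0 * B 1 - b 1 * B 0) * (c 0 * C 1 - c 1 * C 0) ≠ 0 := by
    rintro h
    simp [h] at hdet₀
  obtain ha | hA : a 1 = 0 ∨ A 1 = 0 := by simpa [hdet] using hdet₁
  · simp only [ha, zero_mul, zero_add] at h100 h101 h110
    have hC : C 1 = 0 := by linear_combination C 1 * h100 - C 0 * h101
    have hB : B 1 = 0 := by linear_combination B 1 * h100 - B 0 * h110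
    simp only [hB, hC, mul_zero, add_zero] at h001 h010 h011
    exact one_ne_zero (by
      linear_combination h001 + a 0 * b 0 * c 1 * h010 - a 0 * b 0 * c 0 * h011 : (1 : F) = 0)
  · simp only [hA, zero_mul, add_zero] at h100 h101 h110
    have hc : c 1 = 0 := by linear_combination c 1 * h100 - c 0 * h101
    have hb : b 1 = 0 := by linear_combination b 1 * h100 - b 0 * h110
    simp only [hb, hc, mul_zero, zero_add] at h001 h010 h011
    exact one_ne_zero (by
      linear_combination h001 + A 0 * B 0 * C 1 * h010 - A 0 * B 0 * C 0 * h011 : (1 : F) = 0)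

theorem Wtensor_three_not_isSumOfSimple_two : ¬ IsSumOfSimple 2 (Wtensor F 3) := by
  rintro ⟨v, hv⟩
  refine Wtensor_three_ne_add_simple (v 0 0) (v 0 1) (v 0 2) (v 1 0) (v 1 1) (v 1 2)
    fun x y z => ?_
  simp [hv, Fin.sum_univ_two, Fin.prod_univ_three]

theorem tRank_Wtensor_three : tRank (Wtensor F 3) = 3 :=
  le_antisymm (tRank_le isSumOfSimple_three_Wtensor_three)
    (lt_tRank isSumOfSimple_three_Wtensor_three Wtensor_three_not_isSumOfSimple_two)

end WThree

/-- over a field of characteristic ≠ 2 containing √2,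
`rank(W₃ ⊗ W₃) ≤ 8 < 9 = rank(W₃)²`. -/
theorem rank_W3_tProd_W3 {F : Type v} [Field F] (hchar : ringChar F ≠ 2)
    (hsqrt : ∃ r : F, r ^ 2 = 2) :
    tRank (tProd (Wtensor F 3) (Wtensor F 3)) ≤ 8 ∧ (8 : ℕ) < 9 ∧
      tRank (Wtensor F 3) ^ 2 = 9 := by
  obtain ⟨r, hr⟩ := hsqrt
  have h2 : (2 : F) ≠ 0 := Ring.two_ne_zero hchar
  have hs : 2 * r⁻¹ ^ 2 = 1 := by rw [inv_pow, hr, mul_inv_cancel₀ h2]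
  exact ⟨tRank_le (isSumOfSimple_eight_tProd_Wtensor_three hs), by norm_num,
    by rw [tRank_Wtensor_three]; norm_num⟩
end

section
/- If t ⊵_d s (t degenerates to s with approximation degree d) for k-tensors t and s, then t ⊵_d^{(k−1)d} s, i.e., the degeneration can be realized with error degree at most (k−1)d. -/
open scoped BigOperators

universe u v

/-!
Only the coefficients of `ε⁰, …, ε^d` in the entries of the maps `Aᵢ(ε)` influence the
coefficients of `ε⁰, …, ε^d` in `(A₁(ε) ⊗ ⋯ ⊗ Aₖ(ε)) t`. Reducing every entry modulo `ε^(d+1)`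
therefore keeps the leading term `ε^d s`, while the image becomes a polynomial of degree at most
`kd`; everything in degrees `d + 1, …, kd` is error, so the error degree is at most `(k - 1)d`.
-/

open Polynomial

theorem Finset.dvd_prod_sub_prod {ι R : Type*} [CommRing R] (s : Finset ι) {f g : ι → R} {a : R}
    (h : ∀ i ∈ s, a ∣ f i - g i) : a ∣ ∏ i ∈ s, f i - ∏ i ∈ s, g i := by
  simp only [← Ideal.mem_span_singleton, ← Ideal.Quotient.eq, map_prod] at h ⊢
  exact Finset.prod_congr rfl h

namespace Polynomial

variable {R : Type*}

theorem X_pow_dvd_sum_C_mul_X_pow_add [CommSemiring R] {n e : ℕ} (f : Fin e → R) :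
    X ^ n ∣ ∑ j : Fin e, C (f j) * X ^ (n + (j : ℕ)) :=
  Finset.dvd_sum fun j _ => (pow_dvd_pow X (Nat.le_add_right n j)).mul_left _

theorem eq_sum_range_monomial_of_coeff_eq_zero [Semiring R] {q : R[X]} {e : ℕ}
    (hq : ∀ j, e ≤ j → q.coeff j = 0) : q = ∑ j ∈ Finset.range e, monomial j (q.coeff j) := by
  ext j
  simp only [finsetSum_coeff, coeff_monomial, Finset.sum_ite_eq', Finset.mem_range]
  split_ifs with hj
  · rfl
  · exact hq j (not_lt.1 hj)

theorem exists_eq_C_mul_X_pow_add_sum [CommRing R] {p : R[X]} {c : R} {d e : ℕ}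
    (hdvd : X ^ (d + 1) ∣ p - C c * X ^ d) (hdeg : p.natDegree ≤ d + e) :
    ∃ f : Fin e → R, p = C c * X ^ d + ∑ j : Fin e, C (f j) * X ^ (d + 1 + (j : ℕ)) := by
  obtain ⟨q, hq⟩ := hdvd
  have hq_high : ∀ j, e ≤ j → q.coeff j = 0 := by
    intro j hj
    rw [← coeff_X_pow_mul q (d + 1), ← hq, coeff_sub, coeff_C_mul_X_pow,
      coeff_eq_zero_of_natDegree_lt (by omega), if_neg (by omega), sub_zero]
  refine ⟨fun j => q.coeff j, ?_⟩
  rw [← sub_eq_iff_eq_add', hq]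
  conv_lhs => rw [eq_sum_range_monomial_of_coeff_eq_zero hq_high]
  rw [Finset.mul_sum, ← Fin.sum_univ_eq_sum_range]
  refine Finset.sum_congr rfl fun j _ => ?_
  rw [← C_mul_X_pow_eq_monomial, pow_add]
  ring

end Polynomial

section TensorMaps

variable {ι R : Type*} [Fintype ι] [DecidableEq ι] {γ δ : ι → Type*} [∀ i, Fintype (γ i)]

/-- `(A₁ ⊗ ⋯ ⊗ Aₖ) t`, where `A i` is the matrix of `Aᵢ`, with rows indexed by `δ i`. -/
def mapTensor [CommSemiring R] (A : ∀ i, δ i → γ i → R) (t : (∀ i, γ i) → R) :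
    (∀ i, δ i) → R :=
  fun x => ∑ y, (∏ i, A i (x i) (y i)) * t y

theorem dvd_mapTensor_sub_mapTensor [CommRing R] {A B : ∀ i, δ i → γ i → R} {c : R}
    (h : ∀ i a b, c ∣ A i a b - B i a b) (t : (∀ i, γ i) → R) (x : ∀ i, δ i) :
    c ∣ mapTensor A t x - mapTensor B t x := by
  rw [mapTensor, mapTensor, ← Finset.sum_sub_distrib]
  refine Finset.dvd_sum fun y _ => ?_
  rw [← sub_mul]
  exact (Finset.dvd_prod_sub_prod _ fun i _ => h i _ _).mul_right _

theorem natDegree_mapTensor_C_le [CommSemiring R] {A : ∀ i, δ i → γ i → R[X]} {n : ℕ}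
    (h : ∀ i a b, (A i a b).natDegree ≤ n) (t : (∀ i, γ i) → R) (x : ∀ i, δ i) :
    (mapTensor A (fun y => C (t y)) x).natDegree ≤ Fintype.card ι * n := by
  refine natDegree_sum_le_of_forall_le _ _ fun y _ => (natDegree_mul_C_le _ _).trans ?_
  calc (∏ i, A i (x i) (y i)).natDegree
      ≤ ∑ i, (A i (x i) (y i)).natDegree := natDegree_prod_le _ _
    _ ≤ ∑ _i : ι, n := Finset.sum_le_sum fun i _ => h i _ _
    _ = Fintype.card ι * n := by simp

end TensorMaps

section Degeneration

variable {F ι : Type*} [Field F] [Fintype ι] [DecidableEq ι] {γ δ : ι → Type*}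
  [∀ i, Fintype (γ i)] {t : (∀ i, γ i) → F} {s : (∀ i, δ i) → F} {d e : ℕ}

theorem Degen.exists_X_pow_dvd (h : Degen t s d e) :
    ∃ A : ∀ i, δ i → γ i → F[X],
      ∀ x, X ^ (d + 1) ∣ mapTensor A (fun y => C (t y)) x - C (s x) * X ^ d := by
  obtain ⟨A, s', hA⟩ := h
  refine ⟨A, fun x => ?_⟩
  rw [mapTensor, hA x, add_sub_cancel_left]
  exact X_pow_dvd_sum_C_mul_X_pow_add _

theorem degen_of_X_pow_dvd {A : ∀ i, δ i → γ i → F[X]}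
    (hdvd : ∀ x, X ^ (d + 1) ∣ mapTensor A (fun y => C (t y)) x - C (s x) * X ^ d)
    (hdeg : ∀ x, (mapTensor A (fun y => C (t y)) x).natDegree ≤ d + e) :
    Degen t s d e := by
  choose s' hs' using fun x => exists_eq_C_mul_X_pow_add_sum (hdvd x) (hdeg x)
  exact ⟨A, fun j x => s' x j, fun x => hs' x⟩

theorem Degen.exists_natDegree_le (h : Degen t s d e) :
    ∃ A : ∀ i, δ i → γ i → F[X], (∀ i a b, (A i a b).natDegree ≤ d) ∧
      ∀ x, X ^ (d + 1) ∣ mapTensor A (fun y => C (t y)) x - C (s x) * X ^ d := by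
  obtain ⟨A, hA⟩ := h.exists_X_pow_dvd
  have hmod : ∀ i a b, X ^ (d + 1) ∣ A i a b - A i a b %ₘ X ^ (d + 1) := fun i a b => by
    rw [modByMonic_eq_sub_mul_div, sub_sub_cancel]
    exact dvd_mul_right _ _
  refine ⟨fun i a b => A i a b %ₘ X ^ (d + 1), fun i a b => ?_, fun x => ?_⟩
  · have hX : (X ^ (d + 1) : F[X]) ≠ 1 := fun h => by simpa using congrArg natDegree h
    have := natDegree_modByMonic_lt (A i a b) (monic_X_pow (d + 1)) hX
    rw [natDegree_X_pow] at this
    exact Nat.lt_succ_iff.mp this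
  · have := dvd_sub (hA x) (dvd_mapTensor_sub_mapTensor hmod (fun y => C (t y)) x)
    rwa [sub_sub_sub_cancel_left] at this

end Degeneration

/-- a degeneration with approximation degree `d` can be realized with
error degree at most `(k−1)d`. -/
theorem degen_error_bound {F : Type v} [Field F] {k : ℕ} {γ δ : Fin k → Type u}
    [∀ i, Fintype (γ i)] (t : (∀ i, γ i) → F) (s : (∀ i, δ i) → F) (d : ℕ)
    (h : ∃ e, Degen t s d e) :
    Degen t s d ((k - 1) * d) := by
  obtain ⟨e, he⟩ := h
  obtain ⟨A, hA_deg, hA_dvd⟩ := he.exists_natDegree_le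
  refine degen_of_X_pow_dvd hA_dvd fun x => (natDegree_mapTensor_C_le hA_deg t x).trans ?_
  rw [Fintype.card_fin, Nat.sub_one_mul]
  exact le_add_tsub
end

section
/- For k ≥ 3, let W_k = Σ b_{i₁} ⊗ ⋯ ⊗ b_{i_k} ∈ (F²)^{⊗k}, summed over all tuples i ∈ {1,2}^k that are permutations of (1,…,1,2). Then rank(W_k) = k, while R^{k−1}(W_k) ≤ 2: explicitly, applying the matrices ((1,1),(ε,0)) to the first k−1 legs and ((1,−1),(ε,0)) to the last leg of the unit tensor ⟨2⟩_k yields ε·W_k + O(ε²) with error terms up to degree ε^k. -/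
open scoped BigOperators

universe u v

/-- The degeneration matrices of STATEMENT 12: `((1,1),(ε,0))` on the first `k−1` legs
and `((1,−1),(ε,0))` on the last leg. -/
noncomputable def degMat (F : Type v) [Field F] (k : ℕ) (i : Fin k) : Fin 2 → Fin 2 → Polynomial F :=
  fun a b =>
    if a = 0 ∧ b = 0 then 1
    else if a = 0 ∧ b = 1 then (if (i : ℕ) = k - 1 then -1 else 1)
    else if a = 1 ∧ b = 0 then Polynomial.X
    else 0


namespace WkAuxiliary

open scoped BigOperators

lemma prod_ite_eq_ite {F : Type v} [Field F] {k : ℕ} (x y : Fin k → Fin 2) :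
    (∏ i, if x i = y i then (1 : F) else 0) = if x = y then 1 else 0 := by
  by_cases h : x = y
  · subst h; simp
  · rw [if_neg h]
    obtain ⟨i, hi⟩ := Function.ne_iff.mp h
    exact Finset.prod_eq_zero (Finset.mem_univ i) (by rw [if_neg hi])

/-- The tensor `W_k + λ·b₁^{⊗k}` used in the substitution-method induction. -/
def auxT {F : Type v} [Field F] (k : ℕ) (lam : F) : (Fin k → Fin 2) → F :=
  fun x => if (∑ i, (x i : ℕ)) = 1 then 1 else if (∑ i, (x i : ℕ)) = 0 then lam else 0

lemma auxT_lb {F : Type v} [Field F] (k : ℕ) (hk : 2 ≤ k) :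
    ∀ (lam : F) (J : Type) (_ : Fintype J) (c : J → F) (v : J → Fin k → Fin 2 → F),
      (∀ x, auxT k lam x = ∑ j, c j * ∏ i, v j i (x i)) → k ≤ Fintype.card J := by
  classical
  induction k, hk using Nat.le_induction with
  | base =>
    intro lam J _ c v h
    by_contra hlt
    push_neg at hlt
    have key : ∀ a b : Fin 2, auxT 2 lam ![a, b] = ∑ j, c j * (v j 0 a * v j 1 b) := by
      intro a b
      rw [h ![a, b]]
      refine Finset.sum_congr rfl fun j _ => ?_
      rw [Fin.prod_univ_two]
      simp
    interval_cases hc : Fintype.card J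
    · have he : IsEmpty J := Fintype.card_eq_zero_iff.mp hc
      have h01 := key 0 1
      simp [auxT, Fin.sum_univ_two] at h01
    · obtain ⟨a, ha⟩ := Fintype.card_eq_one_iff.mp hc
      have hsum : ∀ f : J → F, (∑ j, f j) = f a := by
        intro f
        have : (Finset.univ : Finset J) = {a} := by
          ext b; simp [ha b]
        rw [this, Finset.sum_singleton]
      have e00 : auxT 2 lam ![0, 0] = lam := by
        norm_num [auxT, Fin.sum_univ_two]
      have e01 : auxT 2 lam ![0, 1] = 1 := by
        norm_num [auxT, Fin.sum_univ_two]
      have e10 : auxT 2 lam ![1, 0] = 1 := by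
        norm_num [auxT, Fin.sum_univ_two]
      have e11 : auxT 2 lam ![1, 1] = 0 := by
        norm_num [auxT, Fin.sum_univ_two]
      have h00 := key 0 0; have h01 := key 0 1
      have h10 := key 1 0; have h11 := key 1 1
      rw [hsum, e00] at h00; rw [hsum, e01] at h01
      rw [hsum, e10] at h10; rw [hsum, e11] at h11
      have : (1 : F) = 0 := by
        calc (1 : F) = (c a * (v a 0 0 * v a 1 1)) * (c a * (v a 0 1 * v a 1 0)) := by
              rw [← h01, ← h10]; ring
        _ = (c a * (v a 0 0 * v a 1 0)) * (c a * (v a 0 1 * v a 1 1)) := by ring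
        _ = 0 := by rw [← h11]; ring
      exact one_ne_zero this
  | succ k hk2 IH =>
    intro lam J _ c v h
    have h0 : ∀ (a : Fin 2) (x' : Fin k → Fin 2),
        auxT (k+1) lam (Fin.cons a x') = ∑ j, (c j * v j 0 a) * ∏ i, v j i.succ (x' i) := by
      intro a x'
      rw [h (Fin.cons a x')]
      refine Finset.sum_congr rfl fun j _ => ?_
      rw [Fin.prod_univ_succ]
      simp [Fin.cons_zero, Fin.cons_succ, mul_assoc]
    have hT1 : ∀ x' : Fin k → Fin 2,
        auxT (k+1) lam (Fin.cons 1 x') = (if (∑ i, ((x' i) : ℕ)) = 0 then (1:F) else 0) := by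
      intro x'
      simp only [auxT, Fin.sum_univ_succ, Fin.cons_zero, Fin.cons_succ, Fin.val_one]
      split_ifs <;> first | omega | ring
    have hT0 : ∀ x' : Fin k → Fin 2,
        auxT (k+1) lam (Fin.cons 0 x') = auxT k lam x' := by
      intro x'
      simp only [auxT, Fin.sum_univ_succ, Fin.cons_zero, Fin.cons_succ, Fin.val_zero, zero_add]
    have hex : ∃ j0, c j0 * v j0 0 1 ≠ 0 := by
      by_contra hall
      push_neg at hall
      have h1 := (hT1 (fun _ => 0)).symm.trans (h0 1 (fun _ => 0))
      simp only [Fin.val_zero, Finset.sum_const_zero, if_pos rfl] at h1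
      exact one_ne_zero (h1.trans (Finset.sum_eq_zero fun j _ => by rw [hall j, zero_mul]))
    obtain ⟨j0, hj0⟩ := hex
    have ha : v j0 0 1 ≠ 0 := fun hz => hj0 (by rw [hz, mul_zero])
    set μ : F := - v j0 0 0 / v j0 0 1 with hμ
    have hcoef : v j0 0 0 + μ * v j0 0 1 = 0 := by
      rw [hμ, div_mul_cancel₀ _ ha]; ring
    have key : ∀ x' : Fin k → Fin 2,
        auxT k (lam + μ) x' =
          ∑ j : {j : J // j ≠ j0}, (c j.1 * (v j.1 0 0 + μ * v j.1 0 1)) *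
            ∏ i, v j.1 i.succ (x' i) := by
      intro x'
      have lhs_eq : auxT k (lam + μ) x' =
          auxT (k+1) lam (Fin.cons 0 x') + μ * auxT (k+1) lam (Fin.cons 1 x') := by
        rw [hT0, hT1]
        unfold auxT
        split_ifs <;> first | omega | ring
      rw [lhs_eq, h0, h0]
      rw [Finset.mul_sum, ← Finset.sum_add_distrib]
      have step : ∀ j : J, (c j * v j 0 0) * ∏ i, v j i.succ (x' i) +
          μ * ((c j * v j 0 1) * ∏ i, v j i.succ (x' i)) =
          (c j * (v j 0 0 + μ * v j 0 1)) * ∏ i, v j i.succ (x' i) := fun j => by ring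
      rw [Finset.sum_congr rfl fun j _ => step j]
      rw [← Finset.add_sum_erase _ _ (Finset.mem_univ j0)]
      rw [hcoef, mul_zero, zero_mul, zero_add]
      exact Finset.sum_subtype (Finset.univ.erase j0)
        (fun x => by simp [Finset.mem_erase]) _
    have hcard : k ≤ Fintype.card {j : J // j ≠ j0} :=
      IH (lam + μ) _ _ _ _ key
    have hc1 : Fintype.card {j : J // j ≠ j0} = Fintype.card J - 1 := by
      rw [Fintype.card_subtype_compl, Fintype.card_subtype_eq]
    have hpos : 1 ≤ Fintype.card J := Fintype.card_pos_iff.mpr ⟨j0⟩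
    omega

/-- basis indicator vector -/
def auxE (k : ℕ) (j : Fin k) : Fin k → Fin 2 := fun i => if i = j then 1 else 0

lemma sum_auxE (k : ℕ) (j : Fin k) : (∑ i, ((auxE k j i : Fin 2) : ℕ)) = 1 := by
  unfold auxE
  simp only [apply_ite (fun a : Fin 2 => (a : ℕ)), Fin.val_one, Fin.val_zero]
  simp [Finset.sum_ite_eq']

lemma auxE_inj {k : ℕ} {j j' : Fin k} (h : auxE k j = auxE k j') : j = j' := by
  have := congrFun h j
  unfold auxE at this
  rw [if_pos rfl] at this
  by_contra hne
  rw [if_neg (by exact fun hh => hne hh)] at this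
  exact absurd this (by decide)

lemma exists_auxE {k : ℕ} (x : Fin k → Fin 2) (h : (∑ i, (x i : ℕ)) = 1) :
    ∃ j, x = auxE k j := by
  have hex : ∃ j, x j ≠ 0 := by
    by_contra hall
    push_neg at hall
    rw [Finset.sum_eq_zero (fun i _ => by rw [hall i]; rfl)] at h
    exact absurd h (by omega)
  obtain ⟨j, hj⟩ := hex
  have hj1 : x j = 1 := by omega
  refine ⟨j, funext fun i => ?_⟩
  unfold auxE
  by_cases hij : i = j
  · subst hij; rw [if_pos rfl]; exact hj1
  · rw [if_neg hij]
    have herase : (x j : ℕ) + ∑ i ∈ Finset.univ.erase j, ((x i : ℕ)) = 1 := by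
      rw [Finset.add_sum_erase Finset.univ (fun i => ((x i : ℕ))) (Finset.mem_univ j)]
      exact h
    have hz : ∑ i ∈ Finset.univ.erase j, ((x i : ℕ)) = 0 := by
      have hxj : ((x j : ℕ)) = 1 := by rw [hj1]; rfl
      omega
    have := (Finset.sum_eq_zero_iff).mp hz i (by simp [Finset.mem_erase, hij])
    omega

lemma sum_indicator_eq {F : Type v} [Field F] {k : ℕ} (x : Fin k → Fin 2) :
    (∑ j : Fin k, if x = auxE k j then (1:F) else 0) =
      if (∑ i, (x i : ℕ)) = 1 then 1 else 0 := by
  by_cases h : (∑ i, (x i : ℕ)) = 1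
  · obtain ⟨j, rfl⟩ := exists_auxE x h
    rw [if_pos h]
    rw [Finset.sum_eq_single j (fun i _ hne => if_neg (fun he => hne (auxE_inj he).symm))
      (fun hn => absurd (Finset.mem_univ j) hn)]
    rw [if_pos rfl]
  · rw [if_neg h]
    exact Finset.sum_eq_zero fun j _ => if_neg (fun he => h (by rw [he]; exact sum_auxE k j))

lemma degen_identity {F : Type v} [Field F] (k : ℕ) (hk : 3 ≤ k) (x : Fin k → Fin 2) :
    (∑ y : Fin k → Fin 2, (∏ i, degMat F k i (x i) (y i)) *
        Polynomial.C (unitTensor F 2 k y)) =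
      Polynomial.C (Wtensor F k x) * Polynomial.X ^ 1 +
      ∑ j : Fin (k - 1),
        Polynomial.C (if (∑ i, (x i : ℕ)) = (j : ℕ) + 2 then (1:F) else 0) *
          Polynomial.X ^ (1 + 1 + (j : ℕ)) := by
  classical
  have hunit : ∀ y : Fin k → Fin 2, unitTensor F 2 k y =
      (if y = (fun _ => 0) then 1 else 0) + (if y = (fun _ => 1) then 1 else 0) := by
    intro y
    unfold unitTensor
    rw [Fin.sum_univ_two]
    congr 1
    · exact prod_ite_eq_ite y (fun _ => 0)
    · exact prod_ite_eq_ite y (fun _ => 1)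
  have lhs_eq : (∑ y : Fin k → Fin 2, (∏ i, degMat F k i (x i) (y i)) *
        Polynomial.C (unitTensor F 2 k y)) =
      (∏ i, degMat F k i (x i) 0) + (∏ i, degMat F k i (x i) 1) := by
    simp only [hunit, map_add, apply_ite Polynomial.C, map_one, map_zero, mul_add,
      mul_ite, mul_one, mul_zero, Finset.sum_add_distrib, Finset.sum_ite_eq',
      Finset.mem_univ, if_pos]
  rw [lhs_eq]
  have hP0 : (∏ i, degMat F k i (x i) 0) = Polynomial.X ^ (∑ i, (x i : ℕ)) := by
    rw [← Finset.prod_pow_eq_pow_sum]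
    refine Finset.prod_congr rfl fun i _ => ?_
    have h01 : x i = 0 ∨ x i = 1 := by omega
    rcases h01 with h | h <;> rw [h] <;> simp [degMat]
  rw [hP0]
  have hs_le : (∑ i, (x i : ℕ)) ≤ k := by
    calc (∑ i, (x i : ℕ)) ≤ ∑ _i : Fin k, 1 :=
          Finset.sum_le_sum (fun i _ => by omega)
    _ = k := by simp
  by_cases hs0 : (∑ i, (x i : ℕ)) = 0
  · have hx0 : ∀ i, x i = 0 := by
      intro i
      have := Finset.sum_eq_zero_iff.mp hs0 i (Finset.mem_univ i)
      omega
    have hP1 : (∏ i, degMat F k i (x i) 1) = -1 := by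
      calc (∏ i, degMat F k i (x i) 1)
          = ∏ i : Fin k, (if i = (⟨k-1, by omega⟩ : Fin k) then (-1 : Polynomial F) else 1) := by
            refine Finset.prod_congr rfl fun i _ => ?_
            rw [hx0 i]
            simp [degMat, Fin.ext_iff]
      _ = -1 := by
            rw [Finset.prod_ite_eq' Finset.univ _ (fun _ => (-1 : Polynomial F)),
              if_pos (Finset.mem_univ _)]
    rw [hP1, hs0]
    have hW : Wtensor F k x = 0 := by simp [Wtensor, hs0]
    have hz : ∀ j : Fin (k-1), ((0:ℕ) = (j:ℕ) + 2) = False := fun j => by simp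
    rw [hW]
    simp [hz]
  · have hex : ∃ i, x i ≠ 0 := by
      by_contra hall
      push_neg at hall
      exact hs0 (Finset.sum_eq_zero fun i _ => by rw [hall i]; rfl)
    obtain ⟨i0, hi0⟩ := hex
    have hxi0 : x i0 = 1 := by omega
    have hP1 : (∏ i, degMat F k i (x i) 1) = 0 := by
      refine Finset.prod_eq_zero (Finset.mem_univ i0) ?_
      rw [hxi0]
      simp [degMat]
    rw [hP1, add_zero]
    by_cases hs1 : (∑ i, (x i : ℕ)) = 1
    · have hW : Wtensor F k x = 1 := by simp [Wtensor, hs1]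
      rw [hW, hs1, map_one, one_mul]
      have hz : ∀ j : Fin (k-1), ((1:ℕ) = (j:ℕ) + 2) = False := fun j => by simp
      simp [hz]
    · have hs2 : 2 ≤ (∑ i, (x i : ℕ)) := by omega
      have hW : Wtensor F k x = 0 := by simp [Wtensor, hs1]
      rw [hW, map_zero, zero_mul, zero_add]
      set s := (∑ i, (x i : ℕ)) with hs
      have hjlt : s - 2 < k - 1 := by omega
      have sum_eq : ∑ j : Fin (k - 1),
          Polynomial.C (if s = (j : ℕ) + 2 then (1:F) else 0) *
            Polynomial.X ^ (1 + 1 + (j : ℕ)) =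
          ∑ j : Fin (k - 1), (if j = (⟨s - 2, hjlt⟩ : Fin (k-1)) then
            Polynomial.X ^ (1 + 1 + (j : ℕ)) else 0) := by
        refine Finset.sum_congr rfl fun j _ => ?_
        have hiff : (s = (j : ℕ) + 2) ↔ (j = (⟨s - 2, hjlt⟩ : Fin (k-1))) := by
          rw [Fin.ext_iff]
          simp only []
          omega
        rw [apply_ite Polynomial.C, map_one, map_zero, ite_mul, one_mul, zero_mul,
          if_congr hiff rfl rfl]
      rw [sum_eq, Finset.sum_ite_eq' Finset.univ _
        (fun j : Fin (k-1) => Polynomial.X ^ (1 + 1 + (j : ℕ))), if_pos (Finset.mem_univ _)]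
      congr 1
      simp only []
      omega

end WkAuxiliary


/-- `rank(W_k) = k` while `R^{k−1}(W_k) ≤ 2`, witnessed by the explicit
degeneration `(A₁(ε) ⊗ ⋯ ⊗ A_k(ε)) ⟨2⟩_k = ε·W_k + O(ε²)` with error terms up to `ε^k`. -/


theorem W_k_rank_and_errRank {F : Type v} [Field F] (k : ℕ) (hk : 3 ≤ k) :
    tRank (Wtensor F k) = k ∧
    errRank (k - 1) (Wtensor F k) ≤ 2 ∧
    (∃ s' : Fin (k - 1) → ((Fin k → Fin 2) → F),
      ∀ x : Fin k → Fin 2,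
        (∑ y : Fin k → Fin 2, (∏ i, degMat F k i (x i) (y i)) *
            Polynomial.C (unitTensor F 2 k y)) =
          Polynomial.C (Wtensor F k x) * Polynomial.X ^ 1 +
          ∑ j : Fin (k - 1), Polynomial.C (s' j x) * Polynomial.X ^ (1 + 1 + (j : ℕ))) := by
  classical
  refine ⟨?_, ?_, ?_⟩
  · -- tRank (Wtensor F k) = k
    have upper : k ∈ {r | ∃ v : Fin r → ∀ _i : Fin k, Fin 2 → F,
        ∀ x, Wtensor F k x = ∑ j, ∏ i, v j i (x i)} := by
      refine ⟨fun j i b => if b = WkAuxiliary.auxE k j i then 1 else 0, fun x => ?_⟩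
      show (if (∑ i, (x i : ℕ)) = 1 then (1:F) else 0) = _
      rw [← WkAuxiliary.sum_indicator_eq x]
      exact Finset.sum_congr rfl fun j _ =>
        (WkAuxiliary.prod_ite_eq_ite x (WkAuxiliary.auxE k j)).symm
    refine le_antisymm (Nat.sInf_le upper) (le_csInf ⟨k, upper⟩ ?_)
    rintro r ⟨v, hv⟩
    have hW : ∀ x, WkAuxiliary.auxT k (0:F) x =
        ∑ j : Fin r, (fun _ : Fin r => (1:F)) j * ∏ i, v j i (x i) := by
      intro x
      have e : WkAuxiliary.auxT k (0:F) x = Wtensor F k x := by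
        unfold WkAuxiliary.auxT Wtensor
        split_ifs <;> rfl
      rw [e, hv x]
      exact Finset.sum_congr rfl fun j _ => (one_mul _).symm
    have := WkAuxiliary.auxT_lb k (by omega) 0 (Fin r) inferInstance _ _ hW
    simpa using this
  · -- errRank
    exact Nat.sInf_le ⟨1, degMat F k,
      fun j x => if (∑ i, (x i : ℕ)) = (j : ℕ) + 2 then (1:F) else 0,
      fun x => WkAuxiliary.degen_identity k hk x⟩
  · exact ⟨fun j x => if (∑ i, (x i : ℕ)) = (j : ℕ) + 2 then (1:F) else 0,
      fun x => WkAuxiliary.degen_identity k hk x⟩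
end

section
/- For k ≥ 3 and sufficiently large n (and sufficiently large field F), rank(W_k^{⊗n}) ≤ (n(k−1)+1)·2^n < k^n = rank(W_k)^n. In particular rank(W₃^{⊗7}) < rank(W₃)^7 and rank(W₈^{⊗2}) < rank(W₈)^2. -/
open scoped BigOperators

universe u v

/-!
The `k` simple tensors `b₁ ⊗ ⋯ ⊗ b₂ ⊗ ⋯ ⊗ b₁` give `rank W_k ≤ k`. The reverse inequality is the
substitution method: slicing the first factor at `b₂` shows that some term has nonzero `b₂`-part,
and subtracting a multiple of that slice from the `b₁`-slice removes this term, leaving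
`W_{k-1}` plus a multiple of `b₁^{⊗(k-1)}` with one term fewer.

For the power, `W_k^{⊗n}` is the coefficient of `εⁿ` in
`P(ε) = ∏ⱼ ((b₁ + ε b₂)^{⊗k} - b₁^{⊗k})`, a polynomial divisible by `εⁿ` and of degree at most `nk`.
Interpolating `P(ε) / εⁿ` at `n(k-1)+1` distinct nonzero points extracts this coefficient, and
expanding each `P(t)` over the choice of summand in every factor writes it as `2ⁿ` simple tensors.

Here `b₁`, `b₂` are the coordinates `0`, `1 : Fin 2`.
-/

open Finset

section Fin2

variable {ι : Type*} [Fintype ι]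

theorem sum_val_eq_one_iff [DecidableEq ι] (x : ι → Fin 2) :
    ∑ i, (x i : ℕ) = 1 ↔ ∃ j, x = Pi.single j 1 := by
  constructor
  · intro h
    obtain ⟨j, -, hj⟩ := exists_ne_zero_of_sum_ne_zero (h ▸ one_ne_zero)
    rw [← add_sum_erase _ _ (mem_univ j)] at h
    have hxj : x j = 1 := by omega
    have hrest := sum_eq_zero_iff.mp (by omega : ∑ i ∈ univ.erase j, (x i : ℕ) = 0)
    refine ⟨j, funext fun i => ?_⟩
    by_cases hij : i = j
    · simp [hij, hxj]
    · simpa [hij] using hrest i (by simp [hij])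
  · rintro ⟨j, rfl⟩
    simp [Pi.single_apply, apply_ite]

theorem prod_ite_eq_zero_eq_pow_sum {M : Type*} [CommMonoid M] (a : M) (x : ι → Fin 2) :
    ∏ i, (if x i = 0 then 1 else a) = a ^ ∑ i, (x i : ℕ) := by
  rw [← prod_pow_eq_pow_sum]
  refine prod_congr rfl fun i _ => ?_
  generalize x i = b
  fin_cases b <;> simp

end Fin2

section TensorRank

variable {F : Type*} [Field F] {ι : Type*} [Fintype ι] [DecidableEq ι] {γ : ι → Type*}
  [∀ i, Fintype (γ i)]

theorem tRank_le_card_of_eq_sum {T : (∀ i, γ i) → F} {A : Type*} [Fintype A]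
    (w : A → ∀ i, γ i → F) (h : ∀ x, T x = ∑ a, ∏ i, w a i (x i)) :
    tRank T ≤ Fintype.card A := by
  refine Nat.sInf_le ⟨fun j => w ((Fintype.equivFin A).symm j), fun x => ?_⟩
  rw [h x]
  exact ((Fintype.equivFin A).symm.sum_comp _).symm

theorem tRank_le_card_of_eq_sum_mul [Nonempty ι] {T : (∀ i, γ i) → F} {A : Type*} [Fintype A]
    (c : A → F) (w : A → ∀ i, γ i → F) (h : ∀ x, T x = ∑ a, c a * ∏ i, w a i (x i)) :
    tRank T ≤ Fintype.card A := by
  let i₀ : ι := Classical.arbitrary ι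
  refine tRank_le_card_of_eq_sum (fun a i y => (if i = i₀ then c a else 1) * w a i y) fun x => ?_
  simp only [h x, prod_mul_distrib, prod_ite_eq', mem_univ, if_true]

end TensorRank

section Wtensor

variable {F : Type*} [Field F]

theorem Wtensor_eq_sum_ite_single {k : ℕ} (x : Fin k → Fin 2) :
    Wtensor F k x = ∑ j, if x = Pi.single j 1 then 1 else 0 := by
  rw [Wtensor]
  by_cases hx : ∃ j, x = Pi.single j 1
  · obtain ⟨j₀, rfl⟩ := hx
    have single_inj : ∀ j, (Pi.single j₀ 1 : Fin k → Fin 2) = Pi.single j 1 ↔ j₀ = j := by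
      refine fun j => ⟨fun h => ?_, fun h => h ▸ rfl⟩
      by_contra hne
      simpa [Pi.single_apply, hne] using congrFun h j₀
    simp only [(sum_val_eq_one_iff _).2 ⟨j₀, rfl⟩, single_inj, sum_ite_eq, mem_univ, if_true]
  · have hx' : ∀ j, x ≠ Pi.single j 1 := fun j h => hx ⟨j, h⟩
    simp [(sum_val_eq_one_iff x).not.2 hx, hx']

theorem Wtensor_cons_zero {m : ℕ} (y : Fin m → Fin 2) :
    Wtensor F (m + 1) (Fin.cons 0 y) = Wtensor F m y := by
  simp [Wtensor, Fin.sum_univ_succ]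

theorem Wtensor_cons_one {m : ℕ} (y : Fin m → Fin 2) :
    Wtensor F (m + 1) (Fin.cons 1 y) = if y = 0 then 1 else 0 := by
  simp [Wtensor, Fin.sum_univ_succ, funext_iff]

theorem card_le_of_Wtensor_add_eq_sum {m : ℕ} {J : Type*} [Fintype J] (c : F) (a : J → F)
    (v : J → Fin m → Fin 2 → F)
    (h : ∀ x, Wtensor F m x + (if x = 0 then c else 0) = ∑ j, a j * ∏ i, v j i (x i)) :
    m ≤ Fintype.card J := by
  classical
  induction m generalizing J c with
  | zero => exact Nat.zero_le _
  | succ m ih =>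
    let P : J → (Fin m → Fin 2) → F := fun j y => ∏ i, v j i.succ (y i)
    have slice_zero : ∀ y, Wtensor F m y + (if y = 0 then c else 0) =
        ∑ j, a j * v j 0 0 * P j y := fun y => by
      simpa [P, Fin.prod_univ_succ, Wtensor_cons_zero, mul_assoc, funext_iff,
        Fin.forall_fin_succ] using h (Fin.cons 0 y)
    have slice_one : ∀ y, (if y = 0 then 1 else 0) = ∑ j, a j * v j 0 1 * P j y := fun y => by
      simpa [P, Fin.prod_univ_succ, Wtensor_cons_one, mul_assoc, funext_iff,
        Fin.forall_fin_succ] using h (Fin.cons 1 y)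
    obtain ⟨j₀, -, hj₀⟩ := exists_ne_zero_of_sum_ne_zero (by
      rw [← slice_one 0, if_pos rfl]; exact one_ne_zero)
    have hb : a j₀ * v j₀ 0 1 ≠ 0 := left_ne_zero_of_mul hj₀
    set q := a j₀ * v j₀ 0 0 / (a j₀ * v j₀ 0 1)
    have elim : ∀ y, Wtensor F m y + (if y = 0 then c - q else 0) =
        ∑ j : {j // j ≠ j₀}, (a j * v j 0 0 - q * (a j * v j 0 1)) * P j y := fun y => by
      have full : Wtensor F m y + (if y = 0 then c - q else 0) =
          ∑ j, (a j * v j 0 0 - q * (a j * v j 0 1)) * P j y := by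
        simp only [sub_mul, sum_sub_distrib, mul_assoc q, ← mul_sum, ← slice_zero, ← slice_one]
        split_ifs <;> ring
      rwa [Fintype.sum_eq_add_sum_subtype_ne _ j₀, div_mul_cancel₀ _ hb, sub_self, zero_mul,
        zero_add] at full
    have := ih (c - q) _ (fun (j : {j // j ≠ j₀}) i => v j i.succ) elim
    have hJ : 0 < Fintype.card J := Fintype.card_pos_iff.2 ⟨j₀⟩
    simp only [Fintype.card_subtype_compl, Fintype.card_unique] at this
    omega

theorem tRank_Wtensor (k : ℕ) : tRank (Wtensor F k) = k := by
  have hk : k ∈ {r | ∃ v : Fin r → Fin k → Fin 2 → F,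
      ∀ x, Wtensor F k x = ∑ j, ∏ i, v j i (x i)} :=
    ⟨fun j i b => if b = (Pi.single j 1 : Fin k → Fin 2) i then 1 else 0, fun x => by
      rw [Wtensor_eq_sum_ite_single]
      refine sum_congr rfl fun j _ => ?_
      simp only [Fintype.prod_boole, ← funext_iff]⟩
  refine le_antisymm (Nat.sInf_le hk) (le_csInf ⟨k, hk⟩ fun r ⟨v, hv⟩ => ?_)
  simpa using card_le_of_Wtensor_add_eq_sum 0 1 v (by simpa using hv)

end Wtensor

section Interpolation

variable {F : Type*} [Field F]

theorem exists_sum_mul_pow_add_eq_ite {M : ℕ} {t : Fin M → F} (ht : Function.Injective t)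
    (ht₀ : ∀ m, t m ≠ 0) (n : ℕ) :
    ∃ ν : Fin M → F, ∀ e < M, ∑ m, ν m * t m ^ (n + e) = if e = 0 then 1 else 0 := by
  -- the matrix `(t m ^ (n + e))_{e, m}`
  let A : Matrix (Fin M) (Fin M) F :=
    (Matrix.vandermonde t).transpose * Matrix.diagonal fun m => t m ^ n
  have hA : IsUnit A := by
    rw [Matrix.isUnit_iff_isUnit_det, Matrix.det_mul, Matrix.det_transpose,
      Matrix.det_diagonal, isUnit_iff_ne_zero]
    exact mul_ne_zero (Matrix.det_vandermonde_ne_zero_iff.2 ht)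
      (prod_ne_zero_iff.2 fun m _ => pow_ne_zero n (ht₀ m))
  obtain ⟨ν, hν⟩ := Matrix.mulVec_surjective_iff_isUnit.2 hA fun e => if (e : ℕ) = 0 then 1 else 0
  refine ⟨ν, fun e he => ?_⟩
  rw [← congrFun hν ⟨e, he⟩]
  simp [A, Matrix.mulVec, dotProduct, Matrix.mul_diagonal, pow_add, mul_comm]

end Interpolation

section UpperBound

variable {F : Type*} [Field F]

theorem sum_mul_prod_pow_sub_zero_pow {M n : ℕ} {t ν : Fin M → F}
    (hν : ∀ e < M, ∑ m, ν m * t m ^ (n + e) = if e = 0 then 1 else 0) {d : Fin n → ℕ}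
    (hd : ∑ j, d j < n + M) :
    ∑ m, ν m * ∏ j, (t m ^ d j - 0 ^ d j) = ∏ j, if d j = 1 then 1 else 0 := by
  by_cases hzero : ∃ j, d j = 0
  · obtain ⟨j, hj⟩ := hzero
    rw [prod_eq_zero (mem_univ j) (by simp [hj])]
    exact sum_eq_zero fun m _ => by rw [prod_eq_zero (mem_univ j) (by simp [hj]), mul_zero]
  push Not at hzero
  have hsum : ∑ j, d j = n + ∑ j, (d j - 1) := calc
    ∑ j, d j = ∑ j, ((d j - 1) + 1) := sum_congr rfl fun j _ => by have := hzero j; omega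
    _ = n + ∑ j, (d j - 1) := by simp [sum_add_distrib, add_comm]
  have hprod : ∀ m, ∏ j, (t m ^ d j - 0 ^ d j) = t m ^ (n + ∑ j, (d j - 1)) := fun m => by
    simp only [zero_pow (hzero _), sub_zero, prod_pow_eq_pow_sum, hsum]
  have hone : (∀ j, d j - 1 = 0) ↔ ∀ j, d j = 1 := forall_congr' fun j => by
    have := hzero j; omega
  simp only [hprod, hν _ (by omega : ∑ j, (d j - 1) < M), Fintype.prod_boole, sum_eq_zero_iff,
    mem_univ, true_implies, hone]
  congr

theorem tPow_Wtensor_eq_sum {k n M : ℕ} {t ν : Fin M → F}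
    (hν : ∀ e < M, ∑ m, ν m * t m ^ (n + e) = if e = 0 then 1 else 0) (hM : n * (k - 1) < M)
    (x : Fin n × Fin k → Fin 2) :
    tPow (Wtensor F k) n x = ∑ a : (Fin n → Fin 2) × Fin M,
      (ν a.2 * ∏ j, if a.1 j = 1 then 1 else -1) *
        ∏ p, if x p = 0 then 1 else if a.1 p.1 = 1 then t a.2 else 0 := by
  set d : Fin n → ℕ := fun j => ∑ i, (x (j, i) : ℕ)
  have hd : ∑ j, d j < n + M := calc
    ∑ j, d j ≤ ∑ _j : Fin n, k := sum_le_sum fun j _ =>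
      (sum_le_sum fun i _ => Fin.is_le (x (j, i))).trans (by simp)
    _ = n * k := by simp
    _ ≤ n * (k - 1) + n := by rw [← Nat.mul_succ]; exact Nat.mul_le_mul_left _ (by omega)
    _ < n + M := by omega
  have hblock : ∀ (s : Fin n → Fin 2) (c : F),
      ∏ p : Fin n × Fin k, (if x p = 0 then 1 else if s p.1 = 1 then c else 0) =
        ∏ j, (if s j = 1 then c else 0) ^ d j := fun s c => by
    rw [Fintype.prod_prod_type]
    exact prod_congr rfl fun j _ =>
      prod_ite_eq_zero_eq_pow_sum (if s j = 1 then c else 0) fun i => x (j, i)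
  calc tPow (Wtensor F k) n x = ∏ j, if d j = 1 then 1 else 0 := rfl
    _ = ∑ m, ν m * ∏ j, (t m ^ d j - 0 ^ d j) := (sum_mul_prod_pow_sub_zero_pow hν hd).symm
    _ = ∑ m, ν m * ∑ s : Fin n → Fin 2,
          ∏ j, (if s j = 1 then 1 else -1) * (if s j = 1 then t m else 0) ^ d j := by
      refine sum_congr rfl fun m _ => congrArg _ ?_
      rw [← Fintype.prod_sum fun j (b : Fin 2) =>
        (if b = 1 then (1 : F) else -1) * (if b = 1 then t m else 0) ^ d j]
      refine prod_congr rfl fun j _ => ?_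
      simp [Fin.sum_univ_two, sub_eq_neg_add]
    _ = _ := by
      rw [Fintype.sum_prod_type_right]
      simp only [hblock, mul_sum, prod_mul_distrib, mul_assoc]

theorem tRank_tPow_Wtensor_le [Infinite F] {k n : ℕ} (hk : 0 < k) (hn : 0 < n) :
    tRank (tPow (Wtensor F k) n) ≤ (n * (k - 1) + 1) * 2 ^ n := by
  let e := (Set.finite_singleton (0 : F)).infinite_compl.natEmbedding
  let t : Fin (n * (k - 1) + 1) → F := fun m => e m
  have ht : Function.Injective t := Subtype.val_injective.comp (e.injective.comp Fin.val_injective)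
  obtain ⟨ν, hν⟩ := exists_sum_mul_pow_add_eq_ite ht (fun m => (e m).2) n
  have : Nonempty (Fin n × Fin k) := ⟨(⟨0, hn⟩, ⟨0, hk⟩)⟩
  calc tRank (tPow (Wtensor F k) n) ≤ Fintype.card ((Fin n → Fin 2) × Fin (n * (k - 1) + 1)) :=
        tRank_le_card_of_eq_sum_mul (A := (Fin n → Fin 2) × Fin (n * (k - 1) + 1))
          (fun a => ν a.2 * ∏ j, if a.1 j = 1 then 1 else -1)
          (fun a p b => if b = 0 then 1 else if a.1 p.1 = 1 then t a.2 else 0)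
          (tPow_Wtensor_eq_sum hν (Nat.lt_succ_self _))
    _ = (n * (k - 1) + 1) * 2 ^ n := by simp [mul_comm]

end UpperBound

theorem mul_add_one_mul_two_pow_lt_pow {q n : ℕ} (hq : 2 ≤ q) (hn : 8 ≤ n) :
    (n * q + 1) * 2 ^ n < (q + 1) ^ n := by
  induction n, hn using Nat.le_induction with
  | base =>
    have h : 3 ^ 7 * (q + 1) ≤ (q + 1) ^ 8 :=
      Nat.mul_le_mul_right _ (Nat.pow_le_pow_left (by omega) 7)
    norm_num at h ⊢
    omega
  | succ n hn ih =>
    calc ((n + 1) * q + 1) * 2 ^ (n + 1) = 2 * ((n + 1) * q + 1) * 2 ^ n := by ring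
      _ ≤ 3 * ((n * q + 1) * 2 ^ n) := by
        rw [← mul_assoc]; exact Nat.mul_le_mul_right _ (by nlinarith)
      _ < 3 * (q + 1) ^ n := by omega
      _ ≤ (q + 1) ^ (n + 1) := by rw [pow_succ']; gcongr; omega

theorem tRank_tPow_Wtensor_lt_pow {F : Type*} [Field F] [Infinite F] {k n : ℕ} (hk : 0 < k)
    (hn : 0 < n) (h : (n * (k - 1) + 1) * 2 ^ n < k ^ n) :
    tRank (tPow (Wtensor F k) n) < tRank (Wtensor F k) ^ n := by
  rw [tRank_Wtensor]
  exact (tRank_tPow_Wtensor_le hk hn).trans_lt h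

/-- for `k ≥ 3` and sufficiently large `n` (over a large enough field),
`rank(W_k^{⊗n}) ≤ (n(k−1)+1)·2^n < k^n = rank(W_k)^n`; in particular for `(k,n) = (3,7)`
and `(k,n) = (8,2)`. -/
theorem rank_W_k_pow_not_mult {F : Type v} [Field F] [Infinite F] (k : ℕ) (hk : 3 ≤ k) :
    tRank (Wtensor F k) = k ∧
    (∃ N : ℕ, ∀ n ≥ N,
      tRank (tPow (Wtensor F k) n) ≤ (n * (k - 1) + 1) * 2 ^ n ∧
      (n * (k - 1) + 1) * 2 ^ n < k ^ n ∧
      tRank (tPow (Wtensor F k) n) < tRank (Wtensor F k) ^ n) ∧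
    tRank (tPow (Wtensor F 3) 7) < tRank (Wtensor F 3) ^ 7 ∧
    tRank (tPow (Wtensor F 8) 2) < tRank (Wtensor F 8) ^ 2 := by
  refine ⟨tRank_Wtensor k, ⟨8, fun n hn => ?_⟩,
    tRank_tPow_Wtensor_lt_pow (by norm_num) (by norm_num) (by norm_num),
    tRank_tPow_Wtensor_lt_pow (by norm_num) (by norm_num) (by norm_num)⟩
  have hlt : (n * (k - 1) + 1) * 2 ^ n < k ^ n := by
    obtain ⟨q, rfl⟩ : ∃ q, k = q + 1 := ⟨k - 1, by omega⟩
    exact mul_add_one_mul_two_pow_lt_pow (by omega) hn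
  exact ⟨tRank_tPow_Wtensor_le (by omega) (by omega), hlt,
    tRank_tPow_Wtensor_lt_pow (by omega) (by omega) hlt⟩
end

section
/- Let t ∈ V₁ ⊗ V₂ ⊗ V₃ be a tensor over ℂ and let F: V₁ ⊗ V₂ ⊗ V₃ → V′₁ ⊗ V′₂ be a linear map. Then borderrank(t) ≥ rank(F(t)) / max rank(F(v₁ ⊗ v₂ ⊗ v₃)), where the maximum is over all simple tensors v₁ ⊗ v₂ ⊗ v₃ and rank on the right-hand side denotes matrix rank in V′₁ ⊗ V′₂. -/
open scoped BigOperators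

universe u v

/-!
A tensor of rank `r` is a sum of `r` simple tensors, so by subadditivity of matrix rank its image
under `F` has rank at most `r · max rank F(v₁ ⊗ v₂ ⊗ v₃)`. Matrices of rank at most `k` form a
closed set and `F` is continuous, so the same bound passes to limits, i.e. to border rank.
-/

open Module

namespace Matrix

variable {m n K : Type*} [Fintype n] [Field K]

theorem natCast_rank_eq_rank_mulVecLin (A : Matrix m n K) :
    (A.rank : Cardinal) = A.mulVecLin.rank :=
  finrank_eq_rank K _

theorem rank_sum_le {ι : Type*} (s : Finset ι) (A : ι → Matrix m n K) :
    (∑ i ∈ s, A i).rank ≤ ∑ i ∈ s, (A i).rank := by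
  have h := LinearMap.rank_finsetSum_le s fun i => (A i).mulVecLin
  rw [← map_sum (mulVecBilin K K)] at h
  simp only [← natCast_rank_eq_rank_mulVecLin] at h
  exact_mod_cast h

theorem isClosed_setOf_rank_le {𝕜 : Type*} [NontriviallyNormedField 𝕜] [CompleteSpace 𝕜]
    [Fintype m] (k : ℕ) : IsClosed {A : Matrix m n 𝕜 | A.rank ≤ k} := by
  let toCLM : Matrix m n 𝕜 →ₗ[𝕜] (n → 𝕜) →L[𝕜] (m → 𝕜) :=
    LinearMap.toContinuousLinearMap.toLinearMap ∘ₗ mulVecBilin 𝕜 𝕜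
  have h : {A : Matrix m n 𝕜 | A.rank ≤ k} =
      toCLM ⁻¹' {f | ↑(k + 1) ≤ (f : (n → 𝕜) →ₗ[𝕜] m → 𝕜).rank}ᶜ := by
    ext A
    simp [toCLM, ← natCast_rank_eq_rank_mulVecLin]
  rw [h]
  exact (isOpen_setOfPred_nat_le_rank (k + 1)).isClosed_compl.preimage
    toCLM.continuous_of_finiteDimensional

end Matrix

section TensorRank

variable {ι : Type*} [Fintype ι] {γ : ι → Type*} {α β : Type*} [Fintype β]

theorem rank_le_mul_of_eq_sum_simple {K : Type*} [Field K]
    (Fl : ((∀ i, γ i) → K) →ₗ[K] Matrix α β K) {M : ℕ}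
    (hM : ∀ v : ∀ i, γ i → K, (Fl fun x => ∏ i, v i (x i)).rank ≤ M)
    {T : (∀ i, γ i) → K} {r : ℕ} (v : Fin r → ∀ i, γ i → K)
    (hv : ∀ x, T x = ∑ j, ∏ i, v j i (x i)) :
    (Fl T).rank ≤ r * M := by
  have hT : T = ∑ j, fun x => ∏ i, v j i (x i) := funext fun x => by simp [hv x]
  calc (Fl T).rank
      ≤ ∑ j, (Fl fun x => ∏ i, v j i (x i)).rank := by
        rw [hT, map_sum]
        exact Matrix.rank_sum_le _ _
    _ ≤ ∑ _j : Fin r, M := Finset.sum_le_sum fun j _ => hM (v j)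
    _ = r * M := by simp

variable [DecidableEq ι] [∀ i, Fintype (γ i)]

theorem exists_sum_simple_eq_of_nonempty {K : Type*} [Field K] [Nonempty ι]
    (T : (∀ i, γ i) → K) :
    ∃ r, ∃ v : Fin r → ∀ i, γ i → K, ∀ x, T x = ∑ j, ∏ i, v j i (x i) := by
  classical
  obtain ⟨i₀⟩ := ‹Nonempty ι›
  let e := (Fintype.equivFin (∀ i, γ i)).symm
  -- `T = ∑ y, T y • δ_y`, the scalar `T y` being carried by the `i₀`-th factor of `δ_y`.
  refine ⟨_, fun j i c => if c = e j i then (if i = i₀ then T (e j) else 1) else 0, fun x => ?_⟩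
  have hdelta : ∀ y : ∀ i, γ i,
      (∏ i, if x i = y i then (if i = i₀ then T y else 1) else 0) = if x = y then T y else 0 := by
    intro y
    split_ifs with hxy
    · simp [hxy, Finset.prod_ite_eq']
    · obtain ⟨i, hi⟩ := Function.ne_iff.mp hxy
      exact Finset.prod_eq_zero (Finset.mem_univ i) (if_neg hi)
  simp only [hdelta]
  rw [e.sum_comp (fun y => if x = y then T y else 0)]
  simp

theorem exists_sum_simple_eq_tRank {K : Type*} [Field K] [Nonempty ι] (T : (∀ i, γ i) → K) :
    ∃ v : Fin (tRank T) → ∀ i, γ i → K, ∀ x, T x = ∑ j, ∏ i, v j i (x i) :=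
  Nat.sInf_mem (exists_sum_simple_eq_of_nonempty T)

theorem mem_closure_setOf_tRank_le_tBorderRank (T : (∀ i, γ i) → ℂ) :
    T ∈ closure {T' | tRank T' ≤ tBorderRank T} :=
  Nat.sInf_mem (s := {r | T ∈ closure {T' | tRank T' ≤ r}})
    ⟨tRank T, subset_closure (le_refl (tRank T))⟩

theorem rank_le_tRank_mul {K : Type*} [Field K] [Nonempty ι]
    (Fl : ((∀ i, γ i) → K) →ₗ[K] Matrix α β K) {M : ℕ}
    (hM : ∀ v : ∀ i, γ i → K, (Fl fun x => ∏ i, v i (x i)).rank ≤ M) (T : (∀ i, γ i) → K) :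
    (Fl T).rank ≤ tRank T * M :=
  let ⟨v, hv⟩ := exists_sum_simple_eq_tRank T
  rank_le_mul_of_eq_sum_simple Fl hM v hv

theorem rank_le_tBorderRank_mul [Nonempty ι] [Fintype α]
    (Fl : ((∀ i, γ i) → ℂ) →ₗ[ℂ] Matrix α β ℂ) {M : ℕ}
    (hM : ∀ v : ∀ i, γ i → ℂ, (Fl fun x => ∏ i, v i (x i)).rank ≤ M) (T : (∀ i, γ i) → ℂ) :
    (Fl T).rank ≤ tBorderRank T * M :=
  closure_minimal (fun T' hT' => (rank_le_tRank_mul Fl hM T').trans (Nat.mul_le_mul_right M hT'))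
    ((Matrix.isClosed_setOf_rank_le _).preimage Fl.continuous_of_finiteDimensional)
    (mem_closure_setOf_tRank_le_tBorderRank T)

end TensorRank

theorem flattening_lower_bound_general {γ : Fin 3 → Type u} [∀ i, Fintype (γ i)]
    {α β : Type*} [Fintype α] [Fintype β]
    (t : (∀ i, γ i) → ℂ)
    (Fl : ((∀ i, γ i) → ℂ) →ₗ[ℂ] Matrix α β ℂ) :
    (Matrix.rank (Fl t) : ℝ) /
        (↑(sSup {m : ℕ | ∃ v : ∀ i, γ i → ℂ,
            Matrix.rank (Fl (fun x => ∏ i, v i (x i))) = m}) : ℝ)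
      ≤ (tBorderRank t : ℝ) := by
  set M := sSup {m : ℕ | ∃ v : ∀ i, γ i → ℂ, Matrix.rank (Fl (fun x => ∏ i, v i (x i))) = m}
  have hM : ∀ v : ∀ i, γ i → ℂ, (Fl fun x => ∏ i, v i (x i)).rank ≤ M := fun v =>
    le_csSup ⟨Fintype.card β, by rintro _ ⟨w, rfl⟩; exact Matrix.rank_le_card_width _⟩ ⟨v, rfl⟩
  have hkey := rank_le_tBorderRank_mul Fl hM t
  rcases Nat.eq_zero_or_pos M with hM0 | hMpos
  · simp [hM0]
  · rw [div_le_iff₀ (by exact_mod_cast hMpos)]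
    exact_mod_cast hkey

/-- generalised flattening lower bound for border rank:
`borderrank(t) ≥ rank(F(t)) / max_{simple v} rank(F(v))`. -/
theorem flattening_lower_bound {γ : Fin 3 → Type u} [∀ i, Fintype (γ i)]
    {α β : Type*} [Fintype α] [Fintype β] [DecidableEq α] [DecidableEq β]
    (t : (∀ i, γ i) → ℂ)
    (Fl : ((∀ i, γ i) → ℂ) →ₗ[ℂ] Matrix α β ℂ) :
    (Matrix.rank (Fl t) : ℝ) /
        (↑(sSup {m : ℕ | ∃ v : ∀ i, γ i → ℂ,
            Matrix.rank (Fl (fun x => ∏ i, v i (x i))) = m}) : ℝ)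
      ≤ (tBorderRank t : ℝ) :=
  flattening_lower_bound_general t Fl
end

section
/- For q ≥ 7 and k ≥ 3 (over a sufficiently large field), rank((Str_q^k)^{⊗2}) ≤ 3(q+1)² < (2q)² = rank(Str_q^k)², where Str_q^k = Σ_{i=2}^{q+1} b_i⊗b_i⊗b₁⊗b₁^{⊗(k−3)} + b₁⊗b_i⊗b_i⊗b₁^{⊗(k−3)} ∈ (F^{q+1})^{⊗k}. -/
open scoped BigOperators

universe u v

/-- Strassen's tensor `Str_q^k = Σ_{i=2}^{q+1} b_i⊗b_i⊗b₁⊗b₁^{⊗(k−3)} + b₁⊗b_i⊗b_i⊗b₁^{⊗(k−3)}`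
in `(F^{q+1})^{⊗k}` (basis indexed from 0, so `b₁` is index `0`). -/
def strTensor (F : Type v) [Field F] (q k : ℕ) (hk : 3 ≤ k) : (Fin k → Fin (q + 1)) → F :=
  fun x => ∑ i : Fin q,
    ((if (x ⟨0, by omega⟩ = i.succ ∧ x ⟨1, by omega⟩ = i.succ ∧
          ∀ j : Fin k, 2 ≤ (j : ℕ) → x j = 0) then 1 else 0) +
     (if (x ⟨0, by omega⟩ = 0 ∧ x ⟨1, by omega⟩ = i.succ ∧ x ⟨2, by omega⟩ = i.succ ∧
          ∀ j : Fin k, 3 ≤ (j : ℕ) → x j = 0) then 1 else 0))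

/-!
Upper bound. Put `E = ∑_i b_i ⊗ b_i ⊗ b_i ⊗ b_1^{⊗(k-3)}`. For every `ε`, `ε Str + ε² E` is a sum
of `q + 1` simple tensors, so `(ε Str + ε² E)^{⊗2}` has rank at most `(q + 1)²`. As a function of
`ε` it is `ε²` times a polynomial of degree `2` whose value at `0` is `Str^{⊗2}`, so `Str^{⊗2}` is a
linear combination of its values at three distinct nonzero `ε` (Lagrange interpolation).

Lower bound (substitution method). Fixing `b_1` in the last `k - 3` factors, the slices of `Str`
in the third factor are `M_1 = ∑_i b_i ⊗ b_i` and the `q` independent matrices `b_1 ⊗ b_i`. A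
decomposition into `r` simple tensors puts all slices in the span of `r` rank-one matrices; `q` of
these can be exchanged for the `b_1 ⊗ b_i`, and `M_1` modulo the `b_1 ⊗ b_i` keeps a `q × q`
identity block, which needs `q` more. So `r ≥ 2q`.
-/

open Finset

open Polynomial in
/-- `∏ a, (ε A a + ε² B a) = εⁿ g(ε)` for the polynomial `g = ∏ a, (A a + X B a)` of degree `≤ n`,
so `∏ a, A a = g(0)` is recovered from the values at `n + 1` nonzero points by Lagrange
interpolation. -/
theorem exists_prod_eq_sum_prod_mul_add_sq_mul {F : Type*} [Field F] {n : ℕ} (S : Finset F)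
    (hS0 : 0 ∉ S) (hS : #S = n + 1) :
    ∃ d : F → F, ∀ A B : Fin n → F,
      ∏ a, A a = ∑ ε ∈ S, d ε * ∏ a, (ε * A a + ε ^ 2 * B a) := by
  classical
  refine ⟨fun ε => (Lagrange.basis S id ε).eval 0 / ε ^ n, fun A B => ?_⟩
  set g : F[X] := ∏ a, (C (A a) + X * C (B a))
  have hg : g.degree < #S := by
    refine (degree_le_of_natDegree_le (n := n) ((natDegree_prod_le _ _).trans ?_)).trans_lt ?_
    · exact (sum_le_card_nsmul _ _ 1 fun a _ => by compute_degree).trans (by simp)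
    · rw [hS]; exact_mod_cast n.lt_succ_self
  have hinterp := congrArg (eval 0) (Lagrange.eq_interpolate (v := id) (Set.injOn_id _) hg)
  rw [Lagrange.interpolate_apply, eval_finsetSum] at hinterp
  have hg0 : g.eval 0 = ∏ a, A a := by simp [g, eval_prod]
  rw [← hg0, hinterp]
  refine sum_congr rfl fun ε hε => ?_
  have hε0 : ε ≠ 0 := ne_of_mem_of_not_mem hε hS0
  have : ∏ a, (ε * A a + ε ^ 2 * B a) = ε ^ n * g.eval ε := by
    rw [eval_prod, ← Fin.prod_const n ε, ← prod_mul_distrib]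
    refine prod_congr rfl fun a _ => ?_
    simp only [eval_add, eval_mul, eval_C, eval_X]
    ring
  rw [this, eval_mul, eval_C, id]
  field_simp

section TensorRank

variable {F : Type*} [Field F] {ι : Type*} [Fintype ι] {γ : ι → Type*}

theorem exists_fin_eq_sum_of_eq_sum {J : Type*} [Fintype J] {T : (∀ i, γ i) → F}
    (w : J → ∀ i, γ i → F) (h : ∀ x, T x = ∑ j, ∏ i, w j i (x i)) :
    ∃ v : Fin (Fintype.card J) → ∀ i, γ i → F, ∀ x, T x = ∑ j, ∏ i, v j i (x i) :=
  ⟨fun j => w ((Fintype.equivFin J).symm j), fun x => by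
    rw [h x, ← Equiv.sum_comp (Fintype.equivFin J).symm]⟩

variable [DecidableEq ι] [∀ i, Fintype (γ i)]

theorem tRank_le_of_eq_sum {J : Type*} [Fintype J] {T : (∀ i, γ i) → F}
    (w : J → ∀ i, γ i → F) (h : ∀ x, T x = ∑ j, ∏ i, w j i (x i)) :
    tRank T ≤ Fintype.card J :=
  Nat.sInf_le (exists_fin_eq_sum_of_eq_sum w h)

/-- Witness: the coordinate decomposition `T = ∑_y T y • b_y`, with the coefficient `T y` absorbed
into the factor at some index `i₀`. -/
theorem exists_eq_sum_tRank [Nonempty ι] (T : (∀ i, γ i) → F) :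
    ∃ v : Fin (tRank T) → ∀ i, γ i → F, ∀ x, T x = ∑ j, ∏ i, v j i (x i) := by
  classical
  obtain ⟨i₀⟩ := ‹Nonempty ι›
  refine Nat.sInf_mem (s := {r | ∃ v : Fin r → ∀ i, γ i → F, ∀ x, T x = ∑ j, ∏ i, v j i (x i)})
    ⟨_, exists_fin_eq_sum_of_eq_sum
      (fun y i z => (if i = i₀ then T y else 1) * if z = y i then 1 else 0) fun x => ?_⟩
  rw [Fintype.sum_eq_single x]
  · simp
  · intro y hy
    obtain ⟨i, hi⟩ := Function.ne_iff.mp (Ne.symm hy)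
    exact prod_eq_zero (mem_univ i) (by simp [hi])

theorem tRank_zero : tRank (0 : (∀ i, γ i) → F) = 0 :=
  Nat.eq_zero_of_le_zero <| Nat.sInf_le ⟨Fin.elim0, fun _ => by simp⟩

variable [Nonempty ι]

theorem tRank_add_le (S T : (∀ i, γ i) → F) : tRank (S + T) ≤ tRank S + tRank T := by
  obtain ⟨v, hv⟩ := exists_eq_sum_tRank S
  obtain ⟨w, hw⟩ := exists_eq_sum_tRank T
  simpa using tRank_le_of_eq_sum (Sum.elim v w) fun x => by simp [hv, hw]

theorem tRank_smul_le (c : F) (T : (∀ i, γ i) → F) : tRank (c • T) ≤ tRank T := by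
  obtain ⟨i₀⟩ := ‹Nonempty ι›
  obtain ⟨v, hv⟩ := exists_eq_sum_tRank T
  simpa using tRank_le_of_eq_sum (fun j i z => (if i = i₀ then c else 1) * v j i z) fun x => by
    simp only [Pi.smul_apply, smul_eq_mul, hv, mul_sum, prod_mul_distrib, Fintype.prod_ite_eq']

theorem tRank_sum_le {κ : Type*} (s : Finset κ) (T : κ → (∀ i, γ i) → F) :
    tRank (∑ t ∈ s, T t) ≤ ∑ t ∈ s, tRank (T t) := by
  classical
  induction s using Finset.induction_on with
  | empty => simp [tRank_zero]
  | insert t s ht ih =>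
    rw [sum_insert ht, sum_insert ht]
    exact (tRank_add_le _ _).trans (by gcongr)

theorem tRank_tPow_le (T : (∀ i, γ i) → F) (n : ℕ) : tRank (tPow T n) ≤ tRank T ^ n := by
  obtain ⟨v, hv⟩ := exists_eq_sum_tRank T
  simpa using tRank_le_of_eq_sum (fun (f : Fin n → Fin (tRank T)) p => v (f p.1) p.2) fun x => by
    simp only [tPow, hv, Fintype.prod_sum, Fintype.prod_prod_type]

/-- The case `e = 1` of `rank(s^{⊗n}) ≤ (ne + 1) R^e(s)^n`: `s^{⊗n}` is a combination of the
`n + 1` tensors `(ε s + ε² E)^{⊗n}`, `ε ∈ S`. -/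
theorem tRank_tPow_le_of_tRank_smul_add_sq_smul_le (s E : (∀ i, γ i) → F) {r : ℕ}
    (hr : ∀ ε : F, tRank (ε • s + ε ^ 2 • E) ≤ r) {n : ℕ} [NeZero n] (S : Finset F)
    (hS0 : 0 ∉ S) (hS : #S = n + 1) : tRank (tPow s n) ≤ (n + 1) * r ^ n := by
  obtain ⟨d, hd⟩ := exists_prod_eq_sum_prod_mul_add_sq_mul S hS0 hS
  have hs : tPow s n = ∑ ε ∈ S, d ε • tPow (ε • s + ε ^ 2 • E) n := by
    funext x
    simpa [tPow] using hd (fun a => s fun i => x (a, i)) (fun a => E fun i => x (a, i))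
  calc tRank (tPow s n)
      ≤ ∑ ε ∈ S, tRank (d ε • tPow (ε • s + ε ^ 2 • E) n) := hs ▸ tRank_sum_le _ _
    _ ≤ ∑ ε ∈ S, r ^ n := sum_le_sum fun ε _ =>
      ((tRank_smul_le _ _).trans (tRank_tPow_le _ n)).trans (Nat.pow_le_pow_left (hr ε) n)
    _ = (n + 1) * r ^ n := by rw [sum_const, hS, smul_eq_mul]

end TensorRank

section Substitution

open Module Submodule

variable {F : Type*} [Field F] {ι α β : Type*}

theorem Matrix.of_mem_span_vecMulVec [Fintype ι] {γ : Type*} (t : α → β → γ → F)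
    (u : ι → α → F) (v : ι → β → F) (w : ι → γ → F)
    (h : ∀ a b c, t a b c = ∑ j, u j a * v j b * w j c) (c : γ) :
    Matrix.of (fun a b => t a b c) ∈
      span F ((fun j => Matrix.vecMulVec (u j) (v j)) '' ↑(univ : Finset ι)) := by
  have : Matrix.of (fun a b => t a b c) = ∑ j, w j c • Matrix.vecMulVec (u j) (v j) := by
    ext a b
    simp [h, Matrix.vecMulVec_apply, Matrix.sum_apply, mul_comm]
  rw [this]
  exact sum_mem fun j _ => smul_mem _ _ (subset_span ⟨j, mem_coe.2 (mem_univ j), rfl⟩)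

variable [Fintype α] [Fintype β]

theorem Matrix.rank_le_card_of_mem_span_vecMulVec (u : ι → α → F) (v : ι → β → F)
    (s : Finset ι) {N : Matrix α β F}
    (hN : N ∈ span F ((fun j => Matrix.vecMulVec (u j) (v j)) '' s)) : N.rank ≤ #s := by
  classical
  have hcols : span F (Set.range N.col) ≤ span F (u '' s) := by
    refine span_le.mpr (Set.range_subset_iff.mpr fun b => ?_)
    induction hN using span_induction with
    | mem _ h =>
      obtain ⟨j, hj, rfl⟩ := h
      have : (Matrix.vecMulVec (u j) (v j)).col b = v j b • u j := by
        ext a; simp [Matrix.vecMulVec_apply, mul_comm]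
      exact this ▸ smul_mem _ _ (subset_span ⟨j, hj, rfl⟩)
    | zero => exact zero_mem _
    | add _ _ _ _ h₁ h₂ => exact add_mem h₁ h₂
    | smul c _ _ h => exact smul_mem _ c h
  calc N.rank = finrank F (span F (Set.range N.col)) := N.rank_eq_finrank_span_cols
    _ ≤ finrank F (span F (u '' s)) := finrank_mono hcols
    _ ≤ #(s.image u) := by
      have := finrank_span_finset_le_card (R := F) (s.image u)
      rwa [coe_image] at this
    _ ≤ #s := card_image_le

variable [DecidableEq ι]

section Exchange

variable {M : Type*} [AddCommGroup M] [Module F M] {Y S : Submodule F M} {x : M}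

theorem Submodule.finrank_le_finrank_inf_add_one [FiniteDimensional F M] (h : Y ≤ F ∙ x ⊔ S) :
    finrank F Y ≤ finrank F ↥(Y ⊓ S) + 1 := by
  have h1 := finrank_sup_add_finrank_inf_eq Y S
  have h2 := finrank_mono (sup_le h le_sup_right)
  have h3 := finrank_add_le_finrank_add_finrank (F ∙ x) S
  have h4 : finrank F (F ∙ x) ≤ 1 := by simpa using finrank_span_le_card ({x} : Set M)
  omega

theorem Submodule.mem_sup_of_le_span_singleton_sup (h : Y ≤ F ∙ x ⊔ S) (hYS : ¬Y ≤ S) :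
    x ∈ Y ⊔ S := by
  obtain ⟨y, hyY, hyS⟩ := SetLike.not_le_iff_exists.mp hYS
  obtain ⟨_, hw, z, hz, rfl⟩ := mem_sup.mp (h hyY)
  obtain ⟨a, rfl⟩ := mem_span_singleton.mp hw
  have ha : a ≠ 0 := by rintro rfl; exact hyS (by simpa using hz)
  rw [show x = a⁻¹ • ((a • x + z) + -z) by simp [smul_smul, ha]]
  exact smul_mem _ _ (add_mem (mem_sup_left hyY) (mem_sup_right (neg_mem hz)))

/-- Steinitz exchange relative to a subspace `Y`: all but `finrank Y` of the vectors `X j`,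
`j ∈ s`, can be traded for `Y`. -/
theorem exists_subset_card_add_finrank_le [FiniteDimensional F M] (X : ι → M) (s : Finset ι)
    (Y : Submodule F M) (hY : Y ≤ span F (X '' s)) :
    ∃ s' ⊆ s, #s' + finrank F Y ≤ #s ∧ span F (X '' s) ≤ Y ⊔ span F (X '' s') := by
  induction s using Finset.induction_on generalizing Y with
  | empty =>
    have : Y = ⊥ := by simpa using hY
    exact ⟨∅, subset_rfl, by simp [this], by simp⟩
  | insert j s hj ih =>
    have hspan (t : Finset ι) : span F (X '' ↑(insert j t)) = F ∙ X j ⊔ span F (X '' t) := by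
      rw [coe_insert, Set.image_insert_eq, span_insert]
    rw [hspan] at hY ⊢
    rw [card_insert_of_notMem hj]
    by_cases hYs : Y ≤ span F (X '' s)
    · obtain ⟨s', hs', hcard, hle⟩ := ih Y hYs
      refine ⟨insert j s', insert_subset_insert j hs', ?_, ?_⟩
      · have := card_insert_le j s'
        omega
      · rw [hspan]
        exact sup_le (le_sup_of_le_right le_sup_left) (hle.trans (sup_le_sup_left le_sup_right _))
    · obtain ⟨s', hs', hcard, hle⟩ := ih (Y ⊓ span F (X '' s)) inf_le_right
      have hdim := finrank_le_finrank_inf_add_one hY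
      have hle' : span F (X '' s) ≤ Y ⊔ span F (X '' s') :=
        hle.trans (sup_le_sup_right inf_le_left _)
      refine ⟨s', hs'.trans (subset_insert _ _), by omega, sup_le ?_ hle'⟩
      rw [span_singleton_le_iff_mem]
      exact sup_le le_sup_left hle' (mem_sup_of_le_span_singleton_sup hY hYs)

end Exchange

theorem Matrix.exists_rank_sub_add_finrank_le (u : ι → α → F) (v : ι → β → F) (s : Finset ι)
    (Y : Submodule F (Matrix α β F))
    (hY : Y ≤ span F ((fun j => Matrix.vecMulVec (u j) (v j)) '' s)) {N : Matrix α β F}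
    (hN : N ∈ span F ((fun j => Matrix.vecMulVec (u j) (v j)) '' s)) :
    ∃ y ∈ Y, (N - y).rank + finrank F Y ≤ #s := by
  obtain ⟨s', -, hcard, hle⟩ := exists_subset_card_add_finrank_le _ s Y hY
  obtain ⟨y, hy, n, hn, rfl⟩ := mem_sup.mp (hle hN)
  refine ⟨y, hy, ?_⟩
  rw [add_sub_cancel_left]
  have := Matrix.rank_le_card_of_mem_span_vecMulVec u v s' hn
  omega

end Substitution

theorem Fin.forall_three_le_iff {m : ℕ} {P : Fin (m + 3) → Prop} :
    (∀ j : Fin (m + 3), 3 ≤ (j : ℕ) → P j) ↔ ∀ l : Fin m, P l.succ.succ.succ := by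
  refine ⟨fun h l => h _ (by simp), fun h j hj => ?_⟩
  obtain ⟨l, rfl⟩ : ∃ l : Fin m, l.succ.succ.succ = j := ⟨⟨j - 3, by omega⟩, by ext; simp; omega⟩
  exact h l

theorem Fin.forall_two_le_iff {m : ℕ} {P : Fin (m + 3) → Prop} :
    (∀ j : Fin (m + 3), 2 ≤ (j : ℕ) → P j) ↔ P 2 ∧ ∀ l : Fin m, P l.succ.succ.succ := by
  rw [← Fin.forall_three_le_iff]
  refine ⟨fun h => ⟨h ⟨2, by omega⟩ le_rfl, fun j hj => h j (by omega)⟩, fun h j hj => ?_⟩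
  obtain hj | hj := hj.eq_or_lt
  · exact (Fin.ext hj.symm : j = 2) ▸ h.1
  · exact h.2 j hj

section Padding

variable {F : Type*} [Field F] {α : Type*} [DecidableEq α]

/-- The tensor `t ⊗ b_o^{⊗m}` of order `m + 3`, for a trilinear form `t` on `F^α`. -/
def padTrilinear (t : α → α → α → F) (o : α) (m : ℕ) : (Fin (m + 3) → α) → F :=
  fun x => t (x 0) (x 1) (x 2) * ∏ l : Fin m, if x l.succ.succ.succ = o then 1 else 0

theorem tRank_padTrilinear_le [Fintype α] {J : Type*} [Fintype J] (t : α → α → α → F) (o : α)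
    (m : ℕ) (u v w : J → α → F) (h : ∀ a b c, t a b c = ∑ j, u j a * v j b * w j c) :
    tRank (padTrilinear t o m) ≤ Fintype.card J :=
  tRank_le_of_eq_sum (fun j => Fin.cons (u j) (Fin.cons (v j) (Fin.cons (w j)
    fun _ z => if z = o then 1 else 0))) fun x => by
    simp [padTrilinear, h, Fin.prod_univ_succ, sum_mul, mul_assoc]

theorem exists_eq_sum_of_padTrilinear_eq_sum {r : ℕ} (t : α → α → α → F) (o : α) (m : ℕ)
    (v : Fin r → Fin (m + 3) → α → F) (hv : ∀ x, padTrilinear t o m x = ∑ j, ∏ l, v j l (x l)) :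
    ∃ u₁ u₂ u₃ : Fin r → α → F, ∀ a b c, t a b c = ∑ j, u₁ j a * u₂ j b * u₃ j c := by
  refine ⟨fun j => v j 0, fun j => v j 1, fun j c => v j 2 c * ∏ l : Fin m, v j l.succ.succ.succ o,
    fun a b c => ?_⟩
  have hx2 : (Fin.cons a (Fin.cons b (Fin.cons c fun _ => o)) : Fin (m + 3) → α) 2 = c := rfl
  simpa [padTrilinear, Fin.prod_univ_succ, hx2, mul_assoc] using
    hv (Fin.cons a (Fin.cons b (Fin.cons c fun _ => o)))

end Padding

section Strassen

variable (F : Type*) [Field F] (q : ℕ)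

local notation "𝐛" j => (Pi.single j (1 : F) : Fin (q + 1) → F)

/-- `Str_q^3` as a trilinear form. -/
def strTrilinear (a b c : Fin (q + 1)) : F :=
  ∑ i : Fin q, ((𝐛 i.succ) a * (𝐛 i.succ) b * (𝐛 0) c + (𝐛 0) a * (𝐛 i.succ) b * (𝐛 i.succ) c)

/-- The error term `∑_i b_i ⊗ b_i ⊗ b_i` of the border decomposition of `Str_q^3`. -/
def strErrTrilinear (a b c : Fin (q + 1)) : F :=
  ∑ i : Fin q, (𝐛 i.succ) a * (𝐛 i.succ) b * (𝐛 i.succ) c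

variable {F q}

theorem strTensor_eq_padTrilinear {m : ℕ} (hk : 3 ≤ m + 3) :
    strTensor F q (m + 3) hk = padTrilinear (strTrilinear F q) 0 m := by
  funext x
  have hx2 : x ⟨2, by omega⟩ = x 2 := rfl
  simp only [strTensor, padTrilinear, strTrilinear, Fintype.prod_boole, Fin.forall_two_le_iff,
    Fin.forall_three_le_iff, hx2, sum_mul]
  by_cases hZ : ∀ l : Fin m, x l.succ.succ.succ = 0
  · simp only [hZ, implies_true, and_true, if_true, mul_one, Fin.zero_eta, Fin.mk_one,
      Pi.single_apply, ite_zero_mul_ite_zero, and_assoc]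
  · simp [hZ]

/-- The terms of order `ε⁰` of the `q + 1` simple tensors on the right cancel. -/
theorem mul_strTrilinear_add_sq_mul_strErrTrilinear (ε : F) (a b c : Fin (q + 1)) :
    ε * strTrilinear F q a b c + ε ^ 2 * strErrTrilinear F q a b c =
      ∑ i : Fin q, ((𝐛 0) + ε • 𝐛 i.succ) a * (𝐛 i.succ) b * ((𝐛 0) + ε • 𝐛 i.succ) c +
        (-𝐛 0) a * (∑ i : Fin q, 𝐛 i.succ) b * (𝐛 0) c := by
  simp only [strTrilinear, strErrTrilinear, Finset.sum_apply, mul_sum, sum_mul, Pi.add_apply,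
    Pi.smul_apply, Pi.neg_apply, smul_eq_mul, ← sum_add_distrib]
  exact sum_congr rfl fun i _ => by ring

theorem tRank_smul_strTensor_add_sq_smul_le {m : ℕ} (hk : 3 ≤ m + 3) (ε : F) :
    tRank (ε • strTensor F q (m + 3) hk + ε ^ 2 • padTrilinear (strErrTrilinear F q) 0 m) ≤
      q + 1 := by
  have hpad : ε • strTensor F q (m + 3) hk + ε ^ 2 • padTrilinear (strErrTrilinear F q) 0 m =
      padTrilinear (fun a b c => ε * strTrilinear F q a b c + ε ^ 2 * strErrTrilinear F q a b c)
        0 m := by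
    funext x
    simp only [strTensor_eq_padTrilinear, padTrilinear, Pi.add_apply, Pi.smul_apply, smul_eq_mul]
    ring
  rw [hpad]
  simpa using tRank_padTrilinear_le _ 0 m
    (fun (i : Option (Fin q)) => i.elim (-𝐛 0) fun i => (𝐛 0) + ε • 𝐛 i.succ)
    (fun (i : Option (Fin q)) => i.elim (∑ i : Fin q, 𝐛 i.succ) fun i => 𝐛 i.succ)
    (fun (i : Option (Fin q)) => i.elim (𝐛 0) fun i => (𝐛 0) + ε • 𝐛 i.succ)
    fun a b c => by
      rw [mul_strTrilinear_add_sq_mul_strErrTrilinear, Fintype.sum_option, add_comm]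
      rfl

theorem tRank_strTensor_le {m : ℕ} (hk : 3 ≤ m + 3) :
    tRank (strTensor F q (m + 3) hk) ≤ 2 * q := by
  rw [strTensor_eq_padTrilinear]
  simpa [two_mul] using tRank_padTrilinear_le _ 0 m
    (Sum.elim (fun i : Fin q => 𝐛 i.succ) fun _ : Fin q => 𝐛 0)
    (Sum.elim (fun i : Fin q => 𝐛 i.succ) fun i : Fin q => 𝐛 i.succ)
    (Sum.elim (fun _ : Fin q => 𝐛 0) fun i : Fin q => 𝐛 i.succ)
    fun a b c => by
      simp only [strTrilinear, Fintype.sum_sum_type, sum_add_distrib, Sum.elim_inl, Sum.elim_inr]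

open Module Submodule in
/-- Substitution on the slices `c = i + 1`, which are the independent matrices `b_1 ⊗ b_{i+1}`;
what is left of the slice `c = 0` still contains the identity of size `q`. -/
theorem two_mul_le_of_strTrilinear_eq_sum {r : ℕ} (u v w : Fin r → Fin (q + 1) → F)
    (h : ∀ a b c, strTrilinear F q a b c = ∑ j, u j a * v j b * w j c) : 2 * q ≤ r := by
  let slice (c : Fin (q + 1)) : Matrix (Fin (q + 1)) (Fin (q + 1)) F :=
    Matrix.of fun a b => strTrilinear F q a b c
  have hslice : ∀ c, slice c ∈ _ := Matrix.of_mem_span_vecMulVec _ u v w h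
  have hslice_succ (i : Fin q) : slice i.succ = Matrix.single 0 i.succ 1 := by
    ext a b
    simp only [slice, strTrilinear, Matrix.of_apply, Matrix.single_apply, Pi.single_apply]
    by_cases ha : a = 0 <;> by_cases hb : b = i.succ <;> simp [ha, hb, eq_comm]
  set Y := span F (Set.range fun i : Fin q => slice i.succ)
  have hY : finrank F Y = q := by
    rw [finrank_span_eq_card, Fintype.card_fin]
    refine Fintype.linearIndependent_iff.mpr fun g hg i => ?_
    simpa [hslice_succ, Matrix.sum_apply, Matrix.single_apply] using congrFun₂ hg 0 i.succ
  have hY0 {N} (hN : N ∈ Y) (a b : Fin q) : N a.succ b.succ = 0 := by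
    induction hN using span_induction with
    | mem _ h =>
      obtain ⟨i, rfl⟩ := h
      simp [hslice_succ, (Fin.succ_ne_zero a).symm]
    | zero => rfl
    | add _ _ _ _ h₁ h₂ => simp [h₁, h₂]
    | smul c _ _ h => simp [h]
  obtain ⟨y, hy, hrank⟩ := Matrix.exists_rank_sub_add_finrank_le u v univ Y
    (span_le.mpr (Set.range_subset_iff.mpr fun i => hslice _)) (hslice 0)
  have hsub : (slice 0 - y).submatrix Fin.succ Fin.succ = 1 := by
    ext a b
    simp [slice, strTrilinear, hY0 hy, Matrix.one_apply, Pi.single_apply]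
  have := Matrix.rank_submatrix_le (slice 0 - y) Fin.succ Fin.succ
  rw [hsub, Matrix.rank_one, Fintype.card_fin] at this
  simp only [card_univ, Fintype.card_fin, hY] at hrank
  omega

theorem tRank_strTensor {m : ℕ} (hk : 3 ≤ m + 3) :
    tRank (strTensor F q (m + 3) hk) = 2 * q := by
  refine (tRank_strTensor_le hk).antisymm ?_
  obtain ⟨v, hv⟩ :=
    exists_eq_sum_tRank (γ := fun _ => Fin (q + 1)) (strTensor F q (m + 3) hk)
  obtain ⟨u₁, u₂, u₃, h⟩ := exists_eq_sum_of_padTrilinear_eq_sum _ 0 m v fun x => by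
    rw [← strTensor_eq_padTrilinear hk]
    exact hv x
  exact two_mul_le_of_strTrilinear_eq_sum u₁ u₂ u₃ h

end Strassen

/-- for `q ≥ 7`, `k ≥ 3` (over a sufficiently large field),
`rank((Str_q^k)^{⊗2}) ≤ 3(q+1)² < (2q)² = rank(Str_q^k)²`. -/
theorem rank_str_pow_two {F : Type v} [Field F] (q k : ℕ) (hq : 7 ≤ q) (hk : 3 ≤ k)
    (hF : Nonempty (Fin 4 ↪ F)) :
    tRank (tPow (strTensor F q k hk) 2) ≤ 3 * (q + 1) ^ 2 ∧
    3 * (q + 1) ^ 2 < (2 * q) ^ 2 ∧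
    tRank (strTensor F q k hk) = 2 * q := by
  classical
  obtain ⟨m, rfl⟩ : ∃ m, k = m + 3 := ⟨k - 3, by omega⟩
  obtain ⟨e⟩ := hF
  obtain ⟨S, hS, hcard⟩ : ∃ S ⊆ (univ.map e).erase 0, #S = 2 + 1 :=
    exists_subset_card_eq (by simpa using pred_card_le_card_erase (s := univ.map e) (a := 0))
  refine ⟨?_, by nlinarith, tRank_strTensor hk⟩
  calc tRank (tPow (strTensor F q (m + 3) hk) 2)
      ≤ (2 + 1) * (q + 1) ^ 2 :=
        tRank_tPow_le_of_tRank_smul_add_sq_smul_le _ _ (tRank_smul_strTensor_add_sq_smul_le hk) S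
          (fun h => notMem_erase 0 _ (hS h)) hcard
    _ = 3 * (q + 1) ^ 2 := rfl
end
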